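/- arXiv:2104.09795 — 4 statements merged into one kernel-verified Lean document; each statement's English description precedes it below -/
import Mathlib

section
/- Let α > β > 2, a, b > 0, f(r) = a r^{-α} - b r^{-β}, and let L be a two-dimensional lattice of co-volume 1. Then the function V ↦ E_f[√V·L] on (0, ∞) has a unique minimizer, namely V_L = (a α ζ_L(α) / (b β ζ_L(β)))^{2/(α-β)}; i.e., for all V > 0 with V ≠ V_L, E_f[√V·L] > E_f[√(V_L)·L]. -/
open scoped Pointwise

noncomputable section

/-- A point of the Euclidean plane with coordinates `a`, `b`. -/
def vec2 (a b : ℝ) : EuclideanSpace ℝ (Fin 2) := (WithLp.equiv 2 (Fin 2 → ℝ)).symm ![a, b]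

/-- The lattice (as a set of points) generated by `u` and `v`. -/
def latticeSet (u v : EuclideanSpace ℝ (Fin 2)) : Set (EuclideanSpace ℝ (Fin 2)) :=
  {p | ∃ m n : ℤ, p = (m : ℝ) • u + (n : ℝ) • v}

/-- The determinant of the pair of plane vectors `(u, v)`. -/
def det2 (u v : EuclideanSpace ℝ (Fin 2)) : ℝ := u 0 * v 1 - u 1 * v 0

/-- `L` is a two-dimensional lattice, i.e. `L = ℤu ⊕ ℤv` for a basis `(u,v)` of ℝ². -/
def IsLattice2 (L : Set (EuclideanSpace ℝ (Fin 2))) : Prop :=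
  ∃ u v : EuclideanSpace ℝ (Fin 2), det2 u v ≠ 0 ∧ L = latticeSet u v

/-- `L` is a two-dimensional lattice of co-volume `V = |det(u,v)|`. -/
def IsLattice2OfCovol (L : Set (EuclideanSpace ℝ (Fin 2))) (V : ℝ) : Prop :=
  ∃ u v : EuclideanSpace ℝ (Fin 2), det2 u v ≠ 0 ∧ |det2 u v| = V ∧ L = latticeSet u v

/-- The Epstein zeta function of a set of points: `ζ_L(s) = Σ'_{p ∈ L, p ≠ 0} |p|^{-s}`. -/
def epsteinZeta (L : Set (EuclideanSpace ℝ (Fin 2))) (s : ℝ) : ℝ :=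
  ∑' p : ↥(L \ {0}), ‖(p : EuclideanSpace ℝ (Fin 2))‖ ^ (-s)

/-- The Lennard-Jones type energy `E_f[L] = Σ'_{p ∈ L, p ≠ 0} (a|p|^{-α} - b|p|^{-β})`. -/
def LJenergy (a b α β : ℝ) (L : Set (EuclideanSpace ℝ (Fin 2))) : ℝ :=
  ∑' p : ↥(L \ {0}),
    (a * ‖(p : EuclideanSpace ℝ (Fin 2))‖ ^ (-α) - b * ‖(p : EuclideanSpace ℝ (Fin 2))‖ ^ (-β))

/-- The triangular lattice `A₂ = √(2/√3)·[ℤ(1,0) ⊕ ℤ(1/2,√3/2)]`, of co-volume 1. -/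
def triangularLattice : Set (EuclideanSpace ℝ (Fin 2)) :=
  latticeSet (Real.sqrt (2 / Real.sqrt 3) • vec2 1 0)
    (Real.sqrt (2 / Real.sqrt 3) • vec2 (1 / 2) (Real.sqrt 3 / 2))

/-- The square lattice `ℤ² = ℤ(1,0) ⊕ ℤ(0,1)`. -/
def squareLattice : Set (EuclideanSpace ℝ (Fin 2)) := latticeSet (vec2 1 0) (vec2 0 1)

/-- `L` is the image of `L'` under an orthogonal transformation of ℝ². -/
def IsRotationOf (L L' : Set (EuclideanSpace ℝ (Fin 2))) : Prop :=
  ∃ O : EuclideanSpace ℝ (Fin 2) ≃ₗᵢ[ℝ] EuclideanSpace ℝ (Fin 2), L = O '' L'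

/-- The unit co-volume lattice parametrized by `(x, y)` in the half-fundamental domain:
`ℤu ⊕ ℤv` with `u = (1/√y, 0)` and `v = (x/√y, √y)`. -/
def latticeXY (x y : ℝ) : Set (EuclideanSpace ℝ (Fin 2)) :=
  latticeSet (vec2 (1 / Real.sqrt y) 0) (vec2 (x / Real.sqrt y) (Real.sqrt y))

/-- The Riemann zeta function `ζ(s) = Σ_{m ≥ 1} m^{-s}` (real variable version). -/
def riemannZetaReal (s : ℝ) : ℝ := ∑' n : ℕ+, (n : ℝ) ^ (-s)

end


/-!
Scaling by `√V` multiplies `ζ_L(s)` by `V^(-s/2)`, so `E_f[√V·L] = A V^(-α/2) - B V^(-β/2)` with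
`A = a ζ_L(α)` and `B = b ζ_L(β)`, both positive and finite because `L` is the `ℤ`-span of a basis
(convergence of lattice `p`-series for exponents above the rank). The formula for `V_L` says exactly
that `V_L` is the critical point of this one-variable function, and Bernoulli's inequality shows
that the critical point is the strict global minimum.
-/

open Real Set

section Lattice

variable {L : Set (EuclideanSpace ℝ (Fin 2))}

lemma latticeSet_eq_span (u v : EuclideanSpace ℝ (Fin 2)) :
    latticeSet u v = Submodule.span ℤ {u, v} := by
  ext p
  simp [latticeSet, Submodule.mem_span_pair, ← Int.cast_smul_eq_zsmul ℝ, eq_comm]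

lemma linearIndependent_of_det2_ne_zero {u v : EuclideanSpace ℝ (Fin 2)} (h : det2 u v ≠ 0) :
    LinearIndependent ℝ ![u, v] := by
  rw [LinearIndependent.pair_iff]
  intro s t hst
  have h0 : s * u 0 + t * v 0 = 0 := by simpa using congrArg (· 0) hst
  have h1 : s * u 1 + t * v 1 = 0 := by simpa using congrArg (· 1) hst
  have hs : s * det2 u v = 0 := by unfold det2; linear_combination v 1 * h0 - v 0 * h1
  have ht : t * det2 u v = 0 := by unfold det2; linear_combination u 0 * h1 - u 1 * h0
  exact ⟨(mul_eq_zero.1 hs).resolve_right h, (mul_eq_zero.1 ht).resolve_right h⟩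

lemma IsLattice2.exists_basis (hL : IsLattice2 L) :
    ∃ b : Module.Basis (Fin 2) ℝ (EuclideanSpace ℝ (Fin 2)),
      L = Submodule.span ℤ (range b) := by
  obtain ⟨u, v, h, rfl⟩ := hL
  refine
    ⟨basisOfLinearIndependentOfCardEqFinrank (linearIndependent_of_det2_ne_zero h) (by simp), ?_⟩
  rw [latticeSet_eq_span, coe_basisOfLinearIndependentOfCardEqFinrank,
    Matrix.range_cons_cons_empty]

lemma IsLattice2.summable_norm_rpow (hL : IsLattice2 L) {s : ℝ} (hs : 2 < s) :
    Summable fun p : ↥(L \ {0}) ↦ ‖(p : EuclideanSpace ℝ (Fin 2))‖ ^ (-s) := by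
  obtain ⟨b, rfl⟩ := hL.exists_basis
  have hrank : Module.finrank ℤ (Submodule.span ℤ (range b)) = 2 := by
    rw [ZLattice.rank ℝ, finrank_euclideanSpace_fin]
  have hsum : Summable fun z : Submodule.span ℤ (range b) ↦
      ‖(z : EuclideanSpace ℝ (Fin 2))‖ ^ (-s) :=
    ZLattice.summable_norm_rpow _ (-s) (by rw [hrank]; push_cast; linarith)
  -- elaborated without the expected type, against which unification is very slow
  exact (hsum.comp_injective (Set.inclusion_injective (sdiff_subset
    (s := (Submodule.span ℤ (range b) : Set (EuclideanSpace ℝ (Fin 2)))) (t := {0}))) :)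

lemma IsLattice2.smul (hL : IsLattice2 L) {c : ℝ} (hc : c ≠ 0) : IsLattice2 (c • L) := by
  obtain ⟨u, v, h, rfl⟩ := hL
  refine ⟨c • u, c • v, ?_, ?_⟩
  · have : det2 (c • u) (c • v) = c ^ 2 * det2 u v := by simp [det2]; ring
    rw [this]; positivity
  · ext p
    simp [latticeSet, mem_smul_set, smul_add, smul_comm c, eq_comm]

lemma IsLattice2.epsteinZeta_pos (hL : IsLattice2 L) {s : ℝ} (hs : 2 < s) :
    0 < epsteinZeta L s := by
  have hsum := hL.summable_norm_rpow hs
  obtain ⟨u, v, h, rfl⟩ := hL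
  have hu : u ≠ 0 := by rintro rfl; simp [det2] at h
  exact hsum.tsum_pos (fun _ ↦ by positivity) ⟨u, ⟨1, 0, by simp⟩, hu⟩ (by positivity)

lemma epsteinZeta_smul {c : ℝ} (hc : 0 < c) (s : ℝ) :
    epsteinZeta (c • L) s = c ^ (-s) * epsteinZeta L s := by
  rw [epsteinZeta, ← smul_zero c, ← smul_set_singleton, ← smul_set_sdiff₀ hc.ne', ← image_smul,
    tsum_image (fun p ↦ ‖p‖ ^ (-s)) (smul_right_injective _ hc.ne').injOn, epsteinZeta,
    ← tsum_mul_left]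
  simp [norm_smul, abs_of_pos hc, mul_rpow hc.le]

lemma LJenergy_eq_sub {a b α β : ℝ}
    (hα : Summable fun p : ↥(L \ {0}) ↦ ‖(p : EuclideanSpace ℝ (Fin 2))‖ ^ (-α))
    (hβ : Summable fun p : ↥(L \ {0}) ↦ ‖(p : EuclideanSpace ℝ (Fin 2))‖ ^ (-β)) :
    LJenergy a b α β L = a * epsteinZeta L α - b * epsteinZeta L β := by
  rw [LJenergy, (hα.mul_left a).tsum_sub (hβ.mul_left b), tsum_mul_left, tsum_mul_left,
    epsteinZeta, epsteinZeta]

lemma IsLattice2.LJenergy_sqrt_smul (hL : IsLattice2 L) {a b α β : ℝ} (hβ : 2 < β) (hαβ : β < α)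
    {V : ℝ} (hV : 0 < V) :
    LJenergy a b α β (√V • L) =
      a * epsteinZeta L α * V ^ (-(α / 2)) - b * epsteinZeta L β * V ^ (-(β / 2)) := by
  have hL' := hL.smul (sqrt_pos.2 hV).ne'
  rw [LJenergy_eq_sub (hL'.summable_norm_rpow (hβ.trans hαβ)) (hL'.summable_norm_rpow hβ),
    epsteinZeta_smul (sqrt_pos.2 hV), epsteinZeta_smul (sqrt_pos.2 hV), ← neg_div, ← neg_div,
    rpow_div_two_eq_sqrt _ hV.le, rpow_div_two_eq_sqrt _ hV.le]
  ring

end Lattice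

/-- With `t = (V/W)^(-q)` the function is `A W^(-p) t^(p/q) - B W^(-q) t`; the critical-point
condition makes its tangent line at `t = 1` horizontal, and Bernoulli's inequality puts the
strictly convex `t^(p/q)` above that tangent. -/
lemma mul_rpow_neg_sub_mul_rpow_neg_lt {A B p q W V : ℝ} (hA : 0 < A) (hq : 0 < q) (hqp : q < p)
    (hW : 0 < W) (hcrit : A * p * W ^ (-p) = B * q * W ^ (-q)) (hV : 0 < V) (hVW : V ≠ W) :
    A * W ^ (-p) - B * W ^ (-q) < A * V ^ (-p) - B * V ^ (-q) := by
  set t := (V / W) ^ (-q) with ht_def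
  have ht : 0 < t := by positivity
  have ht1 : t ≠ 1 := by
    intro h1
    have hVW1 := rpow_rpow_inv (div_pos hV hW).le (neg_ne_zero.2 hq.ne')
    rw [← ht_def, h1, one_rpow] at hVW1
    exact hVW ((div_eq_one_iff_eq hW.ne').1 hVW1.symm)
  have hVq : V ^ (-q) = W ^ (-q) * t := by
    rw [ht_def, div_rpow hV.le hW.le, mul_div_cancel₀ _ (by positivity)]
  have hVp : V ^ (-p) = W ^ (-p) * t ^ (p / q) := by
    rw [ht_def, ← rpow_mul (div_pos hV hW).le, show -q * (p / q) = -p by field_simp,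
      div_rpow hV.le hW.le, mul_div_cancel₀ _ (by positivity)]
  have hbernoulli : 1 + p / q * (t - 1) < t ^ (p / q) := by
    simpa using one_add_mul_self_lt_rpow_one_add (s := t - 1) (by linarith) (sub_ne_zero.2 ht1)
      ((one_lt_div hq).2 hqp)
  have hslope : A * W ^ (-p) * (p / q) = B * W ^ (-q) := by
    field_simp
    linear_combination hcrit
  calc A * W ^ (-p) - B * W ^ (-q)
      = A * W ^ (-p) * (1 + p / q * (t - 1)) - B * W ^ (-q) * t := by
        linear_combination (1 - t) * hslope
    _ < A * W ^ (-p) * t ^ (p / q) - B * W ^ (-q) * t := by gcongr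
    _ = A * V ^ (-p) - B * V ^ (-q) := by rw [hVp, hVq]; ring

lemma mul_rpow_neg_eq_of_rpow_sub_eq_div {C D p q W : ℝ} (hW : 0 < W) (hD : D ≠ 0)
    (h : W ^ (p - q) = C / D) :
    C * W ^ (-p) = D * W ^ (-q) := by
  rw [show -q = (p - q) + -p by ring, rpow_add hW, h]
  field_simp

/-- For a unit co-volume lattice `L`, the function `V ↦ E_f[√V·L]` on `(0,∞)` has the
unique minimizer `V_L = (aαζ_L(α)/(bβζ_L(β)))^{2/(α-β)}`. -/
theorem unique_optimal_dilation
    (α β a b : ℝ) (hβ : 2 < β) (hαβ : β < α) (ha : 0 < a) (hb : 0 < b)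
    (L : Set (EuclideanSpace ℝ (Fin 2))) (hL : IsLattice2OfCovol L 1) (VL : ℝ)
    (hVL : VL = (a * α * epsteinZeta L α / (b * β * epsteinZeta L β)) ^ (2 / (α - β))) :
    ∀ V : ℝ, 0 < V → V ≠ VL →
      LJenergy a b α β (Real.sqrt VL • L) < LJenergy a b α β (Real.sqrt V • L) := by
  intro V hV hne
  have hL : IsLattice2 L := let ⟨u, v, h, _, hL⟩ := hL; ⟨u, v, h, hL⟩
  have hζα := hL.epsteinZeta_pos (hβ.trans hαβ)
  have hζβ := hL.epsteinZeta_pos hβ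
  have hbase : 0 < a * α * epsteinZeta L α / (b * β * epsteinZeta L β) := by
    have hα0 : 0 < α := by linarith
    have hβ0 : 0 < β := by linarith
    positivity
  have hVL0 : 0 < VL := hVL ▸ rpow_pos_of_pos hbase _
  have hcrit : a * epsteinZeta L α * (α / 2) * VL ^ (-(α / 2)) =
      b * epsteinZeta L β * (β / 2) * VL ^ (-(β / 2)) := by
    refine mul_rpow_neg_eq_of_rpow_sub_eq_div hVL0 (by positivity) ?_
    rw [hVL, show α / 2 - β / 2 = (2 / (α - β))⁻¹ by field_simp,
      rpow_rpow_inv hbase.le (div_pos two_pos (sub_pos.2 hαβ)).ne']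
    field_simp
  rw [hL.LJenergy_sqrt_smul hβ hαβ hVL0, hL.LJenergy_sqrt_smul hβ hαβ hV]
  exact mul_rpow_neg_sub_mul_rpow_neg_lt (by positivity) (by linarith) (by linarith) hVL0 hcrit
    hV hne
end

section
/- For every two-dimensional lattice L of co-volume 1, there exists a point (x, y) in the half-fundamental domain D = {(x,y) ∈ ℝ² : y > 0, 0 ≤ x ≤ 1/2, x² + y² ≥ 1} and an orthogonal transformation O of ℝ² such that L = O·(ℤu ⊕ ℤv) where u = (1/√y, 0) and v = (x/√y, √y); moreover the associated quadratic form satisfies |m·u + n·v|² = (m + x n)²/y + y n² for all (m, n) ∈ ℤ². -/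
/-!
Identify the plane with `ℂ` and orient a basis `(u, v)` of `L` positively, so that `τ = v / u`
lies in the upper half-plane. A change of basis by `g ∈ SL(2, ℤ)` keeps the lattice and replaces
`τ` by `g • τ`, so we may take `τ = x + i y` in the standard fundamental domain.
Then `L = u · (ℤ ⊕ ℤτ)` with `|u|² = 1 / y` (co-volume 1), so the rotation by `√y · u` carries
`ℤ (1 / √y) ⊕ ℤ (x + i y) / √y` onto `L`; a reflection in the real axis replaces `x` by `|x|`.
-/

open Complex

lemma latticeSet_swap (u v : EuclideanSpace ℝ (Fin 2)) : latticeSet u v = latticeSet v u := by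
  ext p
  constructor <;> rintro ⟨m, n, rfl⟩ <;> exact ⟨n, m, add_comm _ _⟩

lemma latticeSet_neg_right (u v : EuclideanSpace ℝ (Fin 2)) :
    latticeSet u (-v) = latticeSet u v := by
  ext p
  constructor <;> rintro ⟨m, n, rfl⟩ <;> exact ⟨m, -n, by push_cast; module⟩

lemma latticeSet_basis_change (u v : EuclideanSpace ℝ (Fin 2)) {a b c d : ℤ}
    (h : a * d - b * c = 1) :
    latticeSet ((d : ℝ) • u + (c : ℝ) • v) ((b : ℝ) • u + (a : ℝ) • v) = latticeSet u v := by
  have h' : (a : ℝ) * d - b * c = 1 := by exact_mod_cast h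
  ext p
  constructor
  · rintro ⟨m, n, rfl⟩
    exact ⟨m * d + n * b, m * c + n * a, by push_cast; module⟩
  · rintro ⟨m, n, rfl⟩
    refine ⟨a * m - b * n, d * n - c * m, ?_⟩
    push_cast
    match_scalars
    · linear_combination (-(m : ℝ)) * h'
    · linear_combination (-(n : ℝ)) * h'

lemma det2_basis_change (u v : EuclideanSpace ℝ (Fin 2)) (a b c d : ℝ) :
    det2 (d • u + c • v) (b • u + a • v) = (a * d - b * c) * det2 u v := by
  simp only [det2, PiLp.add_apply, PiLp.smul_apply, smul_eq_mul]
  ring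

lemma image_latticeSet {F : Type*}
    [FunLike F (EuclideanSpace ℝ (Fin 2)) (EuclideanSpace ℝ (Fin 2))]
    [LinearMapClass F ℝ (EuclideanSpace ℝ (Fin 2)) (EuclideanSpace ℝ (Fin 2))]
    (f : F) (u v : EuclideanSpace ℝ (Fin 2)) :
    f '' latticeSet u v = latticeSet (f u) (f v) := by
  ext p
  constructor
  · rintro ⟨q, ⟨m, n, rfl⟩, rfl⟩
    exact ⟨m, n, by simp⟩
  · rintro ⟨m, n, rfl⟩
    exact ⟨(m : ℝ) • u + (n : ℝ) • v, ⟨m, n, rfl⟩, by simp⟩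

lemma IsLattice2OfCovol.exists_det2_eq {L : Set (EuclideanSpace ℝ (Fin 2))} {V : ℝ}
    (hL : IsLattice2OfCovol L V) : ∃ u v, det2 u v = V ∧ L = latticeSet u v := by
  obtain ⟨u, v, -, hcov, rfl⟩ := hL
  rcases (abs_eq ((abs_nonneg _).trans_eq hcov)).mp hcov with h | h
  · exact ⟨u, v, h, rfl⟩
  · refine ⟨v, u, ?_, latticeSet_swap u v⟩
    simp only [det2] at h ⊢
    linarith

lemma IsRotationOf.refl (L : Set (EuclideanSpace ℝ (Fin 2))) : IsRotationOf L L :=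
  ⟨LinearIsometryEquiv.refl ℝ _, (Set.image_id L).symm⟩

lemma IsRotationOf.trans {L L' L'' : Set (EuclideanSpace ℝ (Fin 2))}
    (h : IsRotationOf L L') (h' : IsRotationOf L' L'') : IsRotationOf L L'' := by
  obtain ⟨O, rfl⟩ := h
  obtain ⟨O', rfl⟩ := h'
  exact ⟨O'.trans O, by rw [Set.image_image]; rfl⟩

noncomputable abbrev toC : EuclideanSpace ℝ (Fin 2) ≃ₗᵢ[ℝ] ℂ := orthonormalBasisOneI.repr.symm

lemma toC_apply (p : EuclideanSpace ℝ (Fin 2)) : toC p = p 0 + p 1 * I :=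
  orthonormalBasisOneI_repr_symm_apply p

lemma toC_vec2 (a b : ℝ) : toC (vec2 a b) = a + b * I := by
  simp [vec2]

lemma im_div_toC (p q : EuclideanSpace ℝ (Fin 2)) :
    (toC q / toC p).im = det2 p q / normSq (toC p) := by
  rw [div_im, div_sub_div_same]
  congr 1
  simp only [toC_apply, det2, add_re, add_im, mul_re, mul_im, ofReal_re, ofReal_im, I_re, I_im]
  ring

lemma toC_ne_zero_of_det2_ne_zero {p q : EuclideanSpace ℝ (Fin 2)} (h : det2 p q ≠ 0) :
    toC p ≠ 0 := by
  rintro hp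
  rw [LinearIsometryEquiv.map_eq_zero_iff] at hp
  simp [hp, det2] at h

lemma im_div_toC_pos {p q : EuclideanSpace ℝ (Fin 2)} (h : 0 < det2 p q) :
    0 < (toC q / toC p).im := by
  rw [im_div_toC]
  exact div_pos h (normSq_pos.2 (toC_ne_zero_of_det2_ne_zero h.ne'))

lemma isRotationOf_latticeSet_latticeXY {u v : EuclideanSpace ℝ (Fin 2)} (h : det2 u v = 1) :
    IsRotationOf (latticeSet u v) (latticeXY (toC v / toC u).re (toC v / toC u).im) := by
  set U := toC u
  set w := toC v / U
  have hU : U ≠ 0 := toC_ne_zero_of_det2_ne_zero (h ▸ one_ne_zero)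
  have hy : 0 < w.im := im_div_toC_pos (h ▸ one_pos)
  have hnormSq : normSq U * w.im = 1 := by
    rw [im_div_toC, h, mul_one_div_cancel (normSq_pos.2 hU).ne']
  have hsy : (√w.im : ℂ) ^ 2 = w.im := by rw [← ofReal_pow, Real.sq_sqrt hy.le]
  have hsy0 : (√w.im : ℂ) ≠ 0 := ofReal_ne_zero.2 (Real.sqrt_pos.2 hy).ne'
  have hζ : ‖(√w.im : ℂ) * U‖ = 1 := by
    rw [norm_mul, norm_real, Real.norm_of_nonneg (Real.sqrt_nonneg _), norm_def,
      ← Real.sqrt_mul hy.le, mul_comm, hnormSq, Real.sqrt_one]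
  let ζ : Circle := ⟨_, mem_sphere_zero_iff_norm.2 hζ⟩
  refine ⟨toC.trans ((rotation ζ).trans toC.symm), ?_⟩
  rw [latticeXY, image_latticeSet]
  congr 1 <;>
    rw [LinearIsometryEquiv.trans_apply, LinearIsometryEquiv.trans_apply,
      LinearIsometryEquiv.eq_symm_apply, rotation_apply, toC_vec2]
  · show U = (√w.im : ℂ) * U * _
    push_cast
    field_simp
    simp
  · show toC v = (√w.im : ℂ) * U * _
    calc toC v = U * (w.re + w.im * I) := by rw [re_add_im, mul_div_cancel₀ _ hU]
      _ = _ := by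
        push_cast
        field_simp
        rw [hsy]
        ring

lemma isRotationOf_latticeXY_neg (x y : ℝ) : IsRotationOf (latticeXY (-x) y) (latticeXY x y) := by
  refine ⟨toC.trans (conjLIE.trans toC.symm), ?_⟩
  rw [latticeXY, latticeXY, image_latticeSet, ← latticeSet_neg_right]
  congr 1 <;> apply toC.injective
  all_goals simp only [LinearIsometryEquiv.trans_apply, LinearIsometryEquiv.apply_symm_apply,
    map_neg, toC_vec2, conjLIE_apply]
  all_goals apply Complex.ext <;> simp [neg_div]

lemma isRotationOf_latticeXY_abs (x y : ℝ) : IsRotationOf (latticeXY x y) (latticeXY |x| y) := by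
  rcases abs_choice x with h | h <;> rw [h]
  · exact IsRotationOf.refl _
  · simpa using isRotationOf_latticeXY_neg (-x) y

lemma exists_basis_div_mem_fd {u v : EuclideanSpace ℝ (Fin 2)} (h : 0 < det2 u v) :
    ∃ u' v', det2 u' v' = det2 u v ∧ latticeSet u' v' = latticeSet u v ∧
      1 ≤ normSq (toC v' / toC u') ∧ |(toC v' / toC u').re| ≤ 1 / 2 := by
  let τ : UpperHalfPlane := ⟨toC v / toC u, im_div_toC_pos h⟩
  obtain ⟨g, hg⟩ := ModularGroup.exists_smul_mem_fd τ
  have hg_det : g 0 0 * g 1 1 - g 0 1 * g 1 0 = 1 := by rw [← Matrix.det_fin_two]; exact g.2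
  have hU : toC u ≠ 0 := toC_ne_zero_of_det2_ne_zero h.ne'
  -- chosen so that `v' / u' = (a τ + b) / (c τ + d) = g • τ`
  set u' := (g 1 1 : ℝ) • u + (g 1 0 : ℝ) • v
  set v' := (g 0 1 : ℝ) • u + (g 0 0 : ℝ) • v
  have hdiv : toC v' / toC u' = ((g • τ : UpperHalfPlane) : ℂ) := by
    have hclear (p q : ℂ) : p * (toC v / toC u) + q = (q * toC u + p * toC v) / toC u := by
      field_simp
      ring
    rw [UpperHalfPlane.coe_specialLinearGroup_apply]
    simp only [u', v', τ, map_add, map_smul, real_smul, algebraMap_int_eq, eq_intCast]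
    rw [hclear, hclear, div_div_div_cancel_right₀ hU]
  refine ⟨u', v', ?_, latticeSet_basis_change u v hg_det, hdiv ▸ hg⟩
  rw [det2_basis_change, ← Int.cast_mul, ← Int.cast_mul, ← Int.cast_sub, hg_det, Int.cast_one,
    one_mul]

lemma norm_sq_vec2 (a b : ℝ) : ‖vec2 a b‖ ^ 2 = a ^ 2 + b ^ 2 := by
  simp [EuclideanSpace.norm_sq_eq, vec2, Fin.sum_univ_two]

lemma norm_sq_latticeXY_combination {x y : ℝ} (hy : 0 < y) (m n : ℤ) :
    ‖(m : ℝ) • vec2 (1 / √y) 0 + (n : ℝ) • vec2 (x / √y) √y‖ ^ 2 =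
      ((m : ℝ) + x * n) ^ 2 / y + y * (n : ℝ) ^ 2 := by
  have hcomb : (m : ℝ) • vec2 (1 / √y) 0 + (n : ℝ) • vec2 (x / √y) √y =
      vec2 ((m + x * n) / √y) (n * √y) := by
    ext i
    fin_cases i <;> simp [vec2]
    ring
  have hsy : √y ^ 2 = y := Real.sq_sqrt hy.le
  rw [hcomb, norm_sq_vec2, div_pow, mul_pow, hsy]
  ring

/-- Parametrization by the half-fundamental domain: any lattice of co-volume 1 is, up to
an orthogonal transformation, of the form `ℤu ⊕ ℤv` with `u = (1/√y, 0)`, `v = (x/√y, √y)`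
for some `(x,y) ∈ D`, and the associated quadratic form is
`|mu + nv|² = (m + xn)²/y + yn²`. -/
theorem fundamental_domain_parametrization
    (L : Set (EuclideanSpace ℝ (Fin 2))) (hL : IsLattice2OfCovol L 1) :
    ∃ x y : ℝ, 0 < y ∧ 0 ≤ x ∧ x ≤ 1 / 2 ∧ 1 ≤ x ^ 2 + y ^ 2 ∧
      (∃ O : EuclideanSpace ℝ (Fin 2) ≃ₗᵢ[ℝ] EuclideanSpace ℝ (Fin 2),
        L = O '' latticeSet (vec2 (1 / Real.sqrt y) 0) (vec2 (x / Real.sqrt y) (Real.sqrt y))) ∧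
      (∀ m n : ℤ,
        ‖(m : ℝ) • vec2 (1 / Real.sqrt y) 0 +
            (n : ℝ) • vec2 (x / Real.sqrt y) (Real.sqrt y)‖ ^ 2 =
          ((m : ℝ) + x * n) ^ 2 / y + y * (n : ℝ) ^ 2) := by
  obtain ⟨u, v, hdet, rfl⟩ := hL.exists_det2_eq
  obtain ⟨u', v', hdet', hlat, hnormSq, hre⟩ := exists_basis_div_mem_fd (hdet ▸ one_pos)
  set w := toC v' / toC u'
  have hy : 0 < w.im := im_div_toC_pos (hdet'.trans hdet ▸ one_pos)
  refine ⟨|w.re|, w.im, hy, abs_nonneg _, hre, ?_, ?_, norm_sq_latticeXY_combination hy⟩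
  · rwa [sq_abs, sq, sq, ← normSq_apply]
  · rw [← hlat]
    exact (isRotationOf_latticeSet_latticeXY (hdet'.trans hdet)).trans
      (isRotationOf_latticeXY_abs _ _)
end

section
/- Let α > β > 2 with α ≠ 2β, and define y_{α,β} = (3^{α/(α-β)} / 2^{1 + 2/(α-β)}) · (α ζ_{ℤ²}(β) / (β ζ(α)))^{2/(α-β)}, where ζ is the Riemann zeta function. Let (x, y) ∈ D with y > y_{α,β}, and let L(x,y) be the lattice of co-volume 1 with quadratic form Q(m,n) = (m + x n)²/y + y n². Then ζ_{L(x,y)}(α) − ζ_{A₂}(α) > (α/β)·(ζ_{L(x,y)}(β) − ζ_{A₂}(β)); equivalently, Q_{α,β}(x,y) > α/β. -/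
noncomputable section QBsection
namespace QB

/-! ### Parametrization of lattice sums by `ℤ² \ {0}` -/

def latVec (u v : EuclideanSpace ℝ (Fin 2)) (p : ℤ × ℤ) : EuclideanSpace ℝ (Fin 2) :=
  (p.1 : ℝ) • u + (p.2 : ℝ) • v

lemma latVec_zero (u v : EuclideanSpace ℝ (Fin 2)) : latVec u v 0 = 0 := by
  simp [latVec]

lemma latVec_injective {u v : EuclideanSpace ℝ (Fin 2)} (h : det2 u v ≠ 0) :
    Function.Injective (latVec u v) := by
  intro p q hpq
  have h0 : (p.1 : ℝ) * u 0 + (p.2 : ℝ) * v 0 = (q.1 : ℝ) * u 0 + (q.2 : ℝ) * v 0 :=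
    congrArg (fun w : EuclideanSpace ℝ (Fin 2) => w 0) hpq
  have h1 : (p.1 : ℝ) * u 1 + (p.2 : ℝ) * v 1 = (q.1 : ℝ) * u 1 + (q.2 : ℝ) * v 1 :=
    congrArg (fun w : EuclideanSpace ℝ (Fin 2) => w 1) hpq
  have e1 : ((p.1 : ℝ) - q.1) * det2 u v = 0 := by
    unfold det2; linear_combination v 1 * h0 - v 0 * h1
  have e2 : ((p.2 : ℝ) - q.2) * det2 u v = 0 := by
    unfold det2; linear_combination u 0 * h1 - u 1 * h0
  have f1 : (p.1 : ℝ) = q.1 := by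
    rcases mul_eq_zero.mp e1 with h' | h'
    · linarith
    · exact absurd h' h
  have f2 : (p.2 : ℝ) = q.2 := by
    rcases mul_eq_zero.mp e2 with h' | h'
    · linarith
    · exact absurd h' h
  exact Prod.ext (by exact_mod_cast f1) (by exact_mod_cast f2)

lemma latVec_ne_zero {u v : EuclideanSpace ℝ (Fin 2)} (h : det2 u v ≠ 0)
    {p : ℤ × ℤ} (hp : p ≠ 0) : latVec u v p ≠ 0 := by
  intro h0
  exact hp (latVec_injective h (h0.trans (latVec_zero u v).symm))

def latEquiv {u v : EuclideanSpace ℝ (Fin 2)} (h : det2 u v ≠ 0) :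
    {p : ℤ × ℤ // p ≠ 0} ≃ ↥(latticeSet u v \ {0}) :=
  Equiv.ofBijective
    (fun p => ⟨latVec u v p.1, ⟨p.1.1, p.1.2, rfl⟩, latVec_ne_zero h p.2⟩)
    (by
      constructor
      · intro p q hpq
        exact Subtype.ext (latVec_injective h (congrArg Subtype.val hpq))
      · rintro ⟨q, ⟨m, n, rfl⟩, hq0⟩
        refine ⟨⟨(m, n), ?_⟩, rfl⟩
        intro h'
        rw [Prod.ext_iff] at h'
        obtain ⟨rfl, rfl⟩ := h'
        exact hq0 (by simp))

lemma epsteinZeta_param {u v : EuclideanSpace ℝ (Fin 2)} (h : det2 u v ≠ 0) (s : ℝ) :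
    epsteinZeta (latticeSet u v) s = ∑' p : {p : ℤ × ℤ // p ≠ 0}, ‖latVec u v p.1‖ ^ (-s) := by
  rw [epsteinZeta, ← (latEquiv h).tsum_eq (fun q : ↥(latticeSet u v \ {0}) =>
    ‖(q : EuclideanSpace ℝ (Fin 2))‖ ^ (-s))]
  rfl

/-! ### Norm formulas -/

lemma norm_latVec_eq {u v : EuclideanSpace ℝ (Fin 2)} {a b c : ℝ}
    (hu0 : u 0 = a) (hu1 : u 1 = 0) (hv0 : v 0 = b) (hv1 : v 1 = c) (p : ℤ × ℤ) :
    ‖latVec u v p‖ = Real.sqrt ((p.1 * a + p.2 * b) ^ 2 + (p.2 * c) ^ 2) := by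
  have h0 : latVec u v p 0 = p.1 * a + p.2 * b := by
    show (p.1 : ℝ) * u 0 + (p.2 : ℝ) * v 0 = _
    rw [hu0, hv0]
  have h1 : latVec u v p 1 = p.2 * c := by
    show (p.1 : ℝ) * u 1 + (p.2 : ℝ) * v 1 = _
    rw [hu1, hv1]; ring
  rw [EuclideanSpace.norm_eq]
  simp [Fin.sum_univ_two, sq_abs, h0, h1]

lemma sqrt_rpow_neg {Q : ℝ} (hQ : 0 ≤ Q) (s : ℝ) : Real.sqrt Q ^ (-s) = Q ^ (-s / 2) := by
  rw [Real.sqrt_eq_rpow, ← Real.rpow_mul hQ]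
  congr 1; ring

lemma term_formula {u v : EuclideanSpace ℝ (Fin 2)} {a b c : ℝ}
    (hu0 : u 0 = a) (hu1 : u 1 = 0) (hv0 : v 0 = b) (hv1 : v 1 = c) (s : ℝ) (p : ℤ × ℤ) :
    ‖latVec u v p‖ ^ (-s) = ((p.1 * a + p.2 * b) ^ 2 + (p.2 * c) ^ 2) ^ (-s / 2) := by
  rw [norm_latVec_eq hu0 hu1 hv0 hv1, sqrt_rpow_neg (by positivity)]

/-! ### The square lattice sum -/

def sqTerm (s : ℝ) (p : ℤ × ℤ) : ℝ := ((p.1 : ℝ) ^ 2 + (p.2 : ℝ) ^ 2) ^ (-s / 2)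

lemma sqTerm_nonneg (s : ℝ) (p : ℤ × ℤ) : 0 ≤ sqTerm s p :=
  Real.rpow_nonneg (by positivity) _

lemma summable_sqTerm {s : ℝ} (hs : 2 < s) :
    Summable (fun p : {p : ℤ × ℤ // p ≠ 0} => sqTerm s p.1) := by
  have h := EisensteinSeries.summable_one_div_norm_rpow hs
  have h2 : Summable (fun p : ℤ × ℤ => ‖![p.1, p.2]‖ ^ (-s)) := by
    have := (finTwoArrowEquiv ℤ).symm.summable_iff.mpr h
    refine this.congr fun p => ?_
    simp [finTwoArrowEquiv]
  refine ((h2.subtype _).of_nonneg_of_le (fun p => sqTerm_nonneg s p.1) fun p => ?_)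
  have hp : p.1 ≠ 0 := p.2
  obtain ⟨⟨m, n⟩, hp⟩ := p
  simp only []
  have hnorm : ‖![m, n]‖ = max |(m : ℝ)| |(n : ℝ)| := by
    rw [EisensteinSeries.norm_eq_max_natAbs]
    simp [Nat.cast_max, Nat.cast_natAbs]
  have h1 : (1 : ℝ) ≤ max |(m : ℝ)| |(n : ℝ)| := by
    have : m ≠ 0 ∨ n ≠ 0 := by
      by_contra hc; push_neg at hc; exact hp (Prod.ext hc.1 hc.2)
    rcases this with hm | hn
    · refine le_max_of_le_left ?_
      have : (1 : ℤ) ≤ |m| := Int.one_le_abs hm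
      calc (1:ℝ) ≤ ((|m| : ℤ) : ℝ) := by exact_mod_cast this
        _ = |(m:ℝ)| := by push_cast; ring
    · refine le_max_of_le_right ?_
      have : (1 : ℤ) ≤ |n| := Int.one_le_abs hn
      calc (1:ℝ) ≤ ((|n| : ℤ) : ℝ) := by exact_mod_cast this
        _ = |(n:ℝ)| := by push_cast; ring
  have hle : ‖![m, n]‖ ≤ Real.sqrt ((m : ℝ) ^ 2 + (n : ℝ) ^ 2) := by
    have hsq : (max |(m:ℝ)| |(n:ℝ)|) ^ 2 ≤ (m : ℝ) ^ 2 + (n : ℝ) ^ 2 := by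
      rcases max_cases |(m:ℝ)| |(n:ℝ)| with ⟨h', _⟩ | ⟨h', _⟩ <;> rw [h'] <;>
        nlinarith [sq_abs (m:ℝ), sq_abs (n:ℝ), sq_nonneg (m:ℝ), sq_nonneg (n:ℝ)]
    have hmax : max |(m:ℝ)| |(n:ℝ)| = Real.sqrt ((max |(m:ℝ)| |(n:ℝ)|) ^ 2) :=
      (Real.sqrt_sq (by positivity)).symm
    rw [hnorm, hmax]
    exact Real.sqrt_le_sqrt hsq
  have hpos : (0 : ℝ) < ‖![m, n]‖ := by rw [hnorm]; linarith
  calc sqTerm s (m, n) = Real.sqrt ((m : ℝ) ^ 2 + (n : ℝ) ^ 2) ^ (-s) := by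
        rw [sqrt_rpow_neg (by positivity)]; rfl
    _ ≤ ‖![m, n]‖ ^ (-s) :=
        Real.rpow_le_rpow_of_nonpos hpos hle (by linarith)

lemma det2_square : det2 (vec2 1 0) (vec2 0 1) = 1 := by
  show (1 : ℝ) * 1 - 0 * 0 = 1; norm_num

lemma epstein_square (s : ℝ) :
    epsteinZeta squareLattice s = ∑' p : {p : ℤ × ℤ // p ≠ 0}, sqTerm s p.1 := by
  rw [show squareLattice = latticeSet (vec2 1 0) (vec2 0 1) from rfl,
    epsteinZeta_param (by rw [det2_square]; norm_num) s]
  refine tsum_congr fun p => ?_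
  rw [term_formula (a := 1) (b := 0) (c := 1) rfl rfl rfl rfl]
  unfold sqTerm
  congr 1
  push_cast
  ring

lemma two_le_epstein_square {s : ℝ} (hs : 2 < s) : 2 ≤ epsteinZeta squareLattice s := by
  classical
  rw [epstein_square]
  have h1 : ((1, 0) : ℤ × ℤ) ≠ 0 := by simp
  have h2 : ((-1, 0) : ℤ × ℤ) ≠ 0 := by simp
  have hne : (⟨(1,0), h1⟩ : {p : ℤ × ℤ // p ≠ 0}) ≠ ⟨(-1,0), h2⟩ := by
    simp [Subtype.ext_iff, Prod.ext_iff]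
  have hsum := Summable.sum_le_tsum ({⟨(1,0), h1⟩, ⟨(-1,0), h2⟩} : Finset {p : ℤ × ℤ // p ≠ 0})
    (fun p _ => sqTerm_nonneg s p.1) (summable_sqTerm hs)
  rw [Finset.sum_pair hne] at hsum
  have e1 : sqTerm s (1, 0) = 1 := by
    unfold sqTerm; norm_num
  have e2 : sqTerm s (-1, 0) = 1 := by
    unfold sqTerm; norm_num
  rw [e1, e2] at hsum
  linarith

lemma epstein_square_pos {s : ℝ} (hs : 2 < s) : 0 < epsteinZeta squareLattice s :=
  lt_of_lt_of_le two_pos (two_le_epstein_square hs)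

/-! ### ζ facts -/

lemma summable_zeta {s : ℝ} (hs : 1 < s) : Summable fun n : ℕ+ => (n : ℝ) ^ (-s) := by
  have h : Summable fun n : ℕ => (n : ℝ) ^ (-s) := Real.summable_nat_rpow.mpr (by linarith)
  exact h.comp_injective (fun a b hab => by exact_mod_cast PNat.coe_injective hab)

lemma one_le_zeta {s : ℝ} (hs : 1 < s) : 1 ≤ riemannZetaReal s := by
  have := Summable.le_tsum (summable_zeta hs) 1 (fun j _ => Real.rpow_nonneg (by positivity) _)
  simpa [riemannZetaReal] using this

lemma zeta_pos {s : ℝ} (hs : 1 < s) : 0 < riemannZetaReal s :=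
  lt_of_lt_of_le one_pos (one_le_zeta hs)

lemma zeta_le_two {s : ℝ} (hs : 2 ≤ s) : riemannZetaReal s ≤ 2 := by
  have hs1 : 1 < s := by linarith
  have hb : HasSum (fun n : ℕ => (1 : ℝ) / (n : ℝ) ^ 2) (Real.pi ^ 2 / 6) := hasSum_zeta_two
  have hsum2 : Summable fun n : ℕ => (1 : ℝ) / (n : ℝ) ^ 2 := hb.summable
  have step1 : riemannZetaReal s ≤ ∑' n : ℕ, (1 : ℝ) / (n : ℝ) ^ 2 := by
    refine Summable.tsum_le_tsum_of_inj (fun n : ℕ+ => (n : ℕ)) (fun a b hab => PNat.coe_injective hab)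
      (fun c _ => by positivity) (fun n => ?_) (summable_zeta hs1) hsum2
    have h1 : ((n : ℕ) : ℝ) ^ (-s) ≤ ((n : ℕ) : ℝ) ^ (-2 : ℝ) := by
      apply Real.rpow_le_rpow_of_exponent_le
      · exact_mod_cast n.one_le
      · linarith
    calc ((n : ℕ+) : ℝ) ^ (-s) ≤ ((n : ℕ) : ℝ) ^ (-2 : ℝ) := h1
      _ = 1 / ((n : ℕ) : ℝ) ^ 2 := by
          rw [Real.rpow_neg (by positivity), Real.rpow_two]; ring
  have heq : (∑' n : ℕ, (1 : ℝ) / (n : ℝ) ^ 2) = Real.pi ^ 2 / 6 := hb.tsum_eq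
  have hpi : Real.pi ^ 2 / 6 ≤ 2 := by nlinarith [Real.pi_lt_d2, Real.pi_pos]
  linarith

lemma hterm' {s : ℝ} (n : ℕ+) :
    (((n : ℤ) : ℝ) ^ 2) ^ (-s / 2) = (n : ℝ) ^ (-s) := by
  have hn : (0 : ℝ) ≤ (n : ℝ) := by positivity
  have hcast : (((n : ℤ) : ℝ)) = ((n : ℕ) : ℝ) := by push_cast; ring
  have h2 : ((n : ℝ) ^ 2) = (n : ℝ) ^ (2 : ℝ) := by
    rw [← Real.rpow_natCast (n : ℝ) 2]; norm_num
  rw [hcast] at *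
  rw [h2, ← Real.rpow_mul hn]
  congr 1; ring

def posEquiv : ℕ+ ≃ ↥{m : ℤ | 0 < m} := by
  refine Equiv.ofBijective (fun n : ℕ+ => ⟨(n : ℤ), by
    simp only [Set.mem_setOf_eq]; exact_mod_cast n.pos⟩) ⟨?_, ?_⟩
  · intro a b hab
    have : (a : ℤ) = (b : ℤ) := congrArg Subtype.val hab
    exact_mod_cast this
  · rintro ⟨m, hm⟩
    simp only [Set.mem_setOf_eq] at hm
    refine ⟨⟨m.toNat, by omega⟩, Subtype.ext ?_⟩
    simp only [PNat.mk_coe]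
    omega

def negEquiv : ℕ+ ≃ ↥{m : ℤ | m < 0} := by
  refine Equiv.ofBijective (fun n : ℕ+ => ⟨-(n : ℤ), by
    simp only [Set.mem_setOf_eq]
    have := n.pos; omega⟩) ⟨?_, ?_⟩
  · intro a b hab
    have h1 : -(a : ℤ) = -(b : ℤ) := congrArg Subtype.val hab
    have : (a : ℤ) = (b : ℤ) := by omega
    exact_mod_cast this
  · rintro ⟨m, hm⟩
    simp only [Set.mem_setOf_eq] at hm
    refine ⟨⟨(-m).toNat, by omega⟩, Subtype.ext ?_⟩
    simp only [PNat.mk_coe]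
    omega

lemma posEquiv_coe (n : ℕ+) : ((posEquiv n : ℤ)) = (n : ℤ) := rfl
lemma negEquiv_coe (n : ℕ+) : ((negEquiv n : ℤ)) = -(n : ℤ) := rfl

lemma tsum_int_sq {s : ℝ} (hs : 1 < s) :
    ∑' m : ↥{m : ℤ | m ≠ 0}, (((m : ℤ) : ℝ) ^ 2) ^ (-s / 2) = 2 * riemannZetaReal s := by
  classical
  have hset : {m : ℤ | m ≠ 0} = {m : ℤ | 0 < m} ∪ {m : ℤ | m < 0} := by
    ext m; simp only [Set.mem_setOf_eq, Set.mem_union]; omega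
  have hdisj : Disjoint {m : ℤ | 0 < m} {m : ℤ | m < 0} := by
    rw [Set.disjoint_left]; intro m hm hm'; simp only [Set.mem_setOf_eq] at hm hm'; omega
  set h : ℤ → ℝ := fun m => ((m : ℝ) ^ 2) ^ (-s / 2) with hh
  have hneg : ∀ k : ℤ, h (-k) = h k := by
    intro k; rw [hh]; push_cast; norm_num
  have hPterm : ∀ n : ℕ+, h ((posEquiv n : ℤ)) = (n : ℝ) ^ (-s) := by
    intro n
    rw [posEquiv_coe, hh]; exact hterm' n
  have hNterm : ∀ n : ℕ+, h ((negEquiv n : ℤ)) = (n : ℝ) ^ (-s) := by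
    intro n
    rw [negEquiv_coe, hneg, hh]; exact hterm' n
  have hP : ∑' m : ↥{m : ℤ | 0 < m}, h m = riemannZetaReal s := by
    rw [← posEquiv.tsum_eq (fun m : ↥{m : ℤ | 0 < m} => h m), riemannZetaReal]
    exact tsum_congr hPterm
  have hN : ∑' m : ↥{m : ℤ | m < 0}, h m = riemannZetaReal s := by
    rw [← negEquiv.tsum_eq (fun m : ↥{m : ℤ | m < 0} => h m), riemannZetaReal]
    exact tsum_congr hNterm
  have hsumP : Summable fun m : ↥{m : ℤ | 0 < m} => h m := by
    rw [← posEquiv.summable_iff]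
    exact (summable_zeta hs).congr fun n => (hPterm n).symm
  have hsumN : Summable fun m : ↥{m : ℤ | m < 0} => h m := by
    rw [← negEquiv.summable_iff]
    exact (summable_zeta hs).congr fun n => (hNterm n).symm
  calc ∑' m : ↥{m : ℤ | m ≠ 0}, h m
      = ∑' m : ↥({m : ℤ | 0 < m} ∪ {m : ℤ | m < 0}), h m := by rw [hset]
    _ = (∑' m : ↥{m : ℤ | 0 < m}, h m) + ∑' m : ↥{m : ℤ | m < 0}, h m :=
        Summable.tsum_union_disjoint hdisj hsumP hsumN
    _ = 2 * riemannZetaReal s := by rw [hP, hN]; ring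

lemma summable_int_sq {s : ℝ} (hs : 1 < s) :
    Summable (fun m : ↥{m : ℤ | m ≠ 0} => (((m : ℤ) : ℝ) ^ 2) ^ (-s / 2)) := by
  have hnat : Summable fun n : ℕ => (((n : ℤ) : ℝ) ^ 2) ^ (-s / 2) := by
    have h : Summable fun n : ℕ => (n : ℝ) ^ (-s) := Real.summable_nat_rpow.mpr (by linarith)
    refine h.congr fun n => ?_
    rcases Nat.eq_zero_or_pos n with rfl | hn
    · simp only [Nat.cast_zero, Int.cast_zero]
      rw [Real.zero_rpow (by intro hc; nlinarith), zero_pow (by norm_num),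
        Real.zero_rpow (by intro hc; nlinarith)]
    · have := hterm' (s := s) ⟨n, hn⟩
      simpa using this.symm
  have hglob : Summable fun m : ℤ => (((m : ℤ) : ℝ) ^ 2) ^ (-s / 2) := by
    refine Summable.of_nat_of_neg hnat (hnat.congr fun n => ?_)
    push_cast
    norm_num
  exact hglob.subtype _

/-! ### rpow comparison helpers -/

lemma rpow_div_eq {B C s : ℝ} (hB : 0 ≤ B) (hC : 0 < C) :
    (B / C) ^ (-s / 2) = C ^ (s / 2) * B ^ (-s / 2) := by
  rw [Real.div_rpow hB hC.le, show (-s / 2) = -(s / 2) by ring, Real.rpow_neg hC.le,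
    div_eq_mul_inv, inv_inv, mul_comm]

lemma rpow_bound {B Q s C : ℝ} (hs : 0 ≤ s) (hC : 0 < C) (hB : 0 < B) (h : B / C ≤ Q) :
    Q ^ (-s / 2) ≤ C ^ (s / 2) * B ^ (-s / 2) := by
  have hBC : 0 < B / C := by positivity
  have h1 : Q ^ (-s / 2) ≤ (B / C) ^ (-s / 2) :=
    Real.rpow_le_rpow_of_nonpos hBC h (by linarith)
  rw [rpow_div_eq hB.le hC] at h1
  exact h1

/-! ### The central pointwise inequality -/

lemma key_ineq {m n : ℤ} {y δ : ℝ} (hy : 1 ≤ y) (hδ : |δ| ≤ 1/2) (h0 : n = 0 → δ = 0)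
    (hne : ¬(m = 0 ∧ n = 0)) :
    ((m : ℝ) ^ 2 + (n : ℝ) ^ 2) / 3 ≤ ((m : ℝ) + δ) ^ 2 + (n : ℝ) ^ 2 * y ^ 2 := by
  rcases eq_or_ne n 0 with rfl | hn
  · have hδ0 : δ = 0 := h0 rfl
    subst hδ0
    push_cast
    nlinarith [sq_nonneg (m : ℝ)]
  · have hn1 : (1 : ℝ) ≤ (n : ℝ) ^ 2 := by
      have : (1 : ℤ) ≤ |n| := Int.one_le_abs hn
      have h2 : (1 : ℝ) ≤ |(n : ℝ)| := by exact_mod_cast (by exact_mod_cast this : (1:ℝ) ≤ |(n:ℝ)|)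
      nlinarith [sq_abs (n : ℝ)]
    have hyn : (n : ℝ) ^ 2 ≤ (n : ℝ) ^ 2 * y ^ 2 := by
      have h1y : 1 ≤ y ^ 2 := by nlinarith
      nlinarith [sq_nonneg (n:ℝ)]
    rcases eq_or_ne m 0 with rfl | hm
    · push_cast
      nlinarith [sq_nonneg δ]
    · have hm1 : (1 : ℝ) ≤ |(m : ℝ)| := by
        have : (1 : ℤ) ≤ |m| := Int.one_le_abs hm
        calc (1:ℝ) ≤ ((|m| : ℤ) : ℝ) := by exact_mod_cast this
          _ = |(m:ℝ)| := by push_cast; ring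
      have habs : |(m : ℝ)| - 1/2 ≤ |(m : ℝ) + δ| := by
        have := abs_add_le ((m:ℝ) + δ) (-δ)
        simp only [add_neg_cancel_right] at this
        have h3 : |(-δ)| ≤ 1/2 := by rw [abs_neg]; exact hδ
        linarith
      have hsq : (|(m : ℝ)| - 1/2) ^ 2 ≤ ((m : ℝ) + δ) ^ 2 := by
        have h4 : 0 ≤ |(m : ℝ)| - 1/2 := by linarith
        nlinarith [sq_abs ((m:ℝ) + δ)]
      nlinarith [sq_abs (m : ℝ), sq_nonneg (|(m:ℝ)| - 1)]


/-! ### Integer quadratic form facts -/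

lemma int_sq_pos {m : ℤ} (hm : m ≠ 0) : (1 : ℤ) ≤ m ^ 2 := by
  rcases lt_or_gt_of_ne hm with h | h <;> nlinarith

lemma one_le_sqsum {p : ℤ × ℤ} (hp : p ≠ 0) : (1 : ℝ) ≤ (p.1 : ℝ) ^ 2 + (p.2 : ℝ) ^ 2 := by
  have : p.1 ≠ 0 ∨ p.2 ≠ 0 := by
    by_contra hc; push_neg at hc; exact hp (Prod.ext hc.1 hc.2)
  rcases this with h | h
  · have := int_sq_pos h
    have h2 : (1 : ℝ) ≤ (p.1 : ℝ) ^ 2 := by exact_mod_cast this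
    nlinarith [sq_nonneg (p.2 : ℝ)]
  · have := int_sq_pos h
    have h2 : (1 : ℝ) ≤ (p.2 : ℝ) ^ 2 := by exact_mod_cast this
    nlinarith [sq_nonneg (p.1 : ℝ)]

lemma sqsum_pos {p : ℤ × ℤ} (hp : p ≠ 0) : (0 : ℝ) < (p.1 : ℝ) ^ 2 + (p.2 : ℝ) ^ 2 :=
  lt_of_lt_of_le one_pos (one_le_sqsum hp)

lemma int_form_one_le {m n : ℤ} (h : ¬(m = 0 ∧ n = 0)) : (1 : ℤ) ≤ m ^ 2 + m * n + n ^ 2 := by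
  rcases eq_or_ne n 0 with rfl | hn
  · have hm : m ≠ 0 := by tauto
    have := int_sq_pos hm
    nlinarith
  · have h1 := int_sq_pos hn
    nlinarith [sq_nonneg (2 * m + n)]

/-! ### The triangular lattice -/

lemma sqrt3_pos : (0 : ℝ) < Real.sqrt 3 := Real.sqrt_pos.mpr (by norm_num)

lemma sqrt3_sq : Real.sqrt 3 ^ 2 = 3 := Real.sq_sqrt (by norm_num)

lemma sqrt3_le_two : Real.sqrt 3 ≤ 2 := by
  nlinarith [sqrt3_sq, sqrt3_pos, sq_nonneg (Real.sqrt 3 - 2)]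

lemma one_le_ktri : (1 : ℝ) ≤ 2 / Real.sqrt 3 := by
  rw [le_div_iff₀ sqrt3_pos]; linarith [sqrt3_le_two]

def triQ (p : ℤ × ℤ) : ℝ :=
  (2 / Real.sqrt 3) * (((p.1 : ℝ) + (p.2 : ℝ) / 2) ^ 2 + 3 * (p.2 : ℝ) ^ 2 / 4)

lemma one_le_triQ {p : ℤ × ℤ} (hp : p ≠ 0) : 1 ≤ triQ p := by
  have hI : (1 : ℤ) ≤ p.1 ^ 2 + p.1 * p.2 + p.2 ^ 2 := by
    apply int_form_one_le
    intro ⟨h1, h2⟩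
    exact hp (Prod.ext h1 h2)
  have hIr : (1 : ℝ) ≤ (p.1 : ℝ) ^ 2 + (p.1 : ℝ) * (p.2 : ℝ) + (p.2 : ℝ) ^ 2 := by
    exact_mod_cast hI
  have hid : ((p.1 : ℝ) + (p.2 : ℝ) / 2) ^ 2 + 3 * (p.2 : ℝ) ^ 2 / 4 =
      (p.1 : ℝ) ^ 2 + (p.1 : ℝ) * (p.2 : ℝ) + (p.2 : ℝ) ^ 2 := by ring
  unfold triQ
  rw [hid]
  nlinarith [one_le_ktri]

lemma triQ_pos {p : ℤ × ℤ} (hp : p ≠ 0) : 0 < triQ p :=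
  lt_of_lt_of_le one_pos (one_le_triQ hp)

lemma half_sqsum_le_triQ (p : ℤ × ℤ) :
    ((p.1 : ℝ) ^ 2 + (p.2 : ℝ) ^ 2) / 2 ≤ triQ p := by
  unfold triQ
  nlinarith [one_le_ktri, sq_nonneg ((p.1 : ℝ) + (p.2 : ℝ)),
    sq_nonneg ((p.1 : ℝ) + (p.2 : ℝ) / 2), sq_nonneg (p.2 : ℝ)]

lemma det2_tri :
    det2 (Real.sqrt (2 / Real.sqrt 3) • vec2 1 0)
      (Real.sqrt (2 / Real.sqrt 3) • vec2 (1 / 2) (Real.sqrt 3 / 2)) = 1 := by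
  have e1 : Real.sqrt (2 / Real.sqrt 3) ^ 2 = 2 / Real.sqrt 3 :=
    Real.sq_sqrt (by positivity)
  have e1' : Real.sqrt (2 / Real.sqrt 3) ^ 2 * Real.sqrt 3 = 2 := by
    rw [e1]; field_simp
  show (Real.sqrt (2 / Real.sqrt 3) * 1) * (Real.sqrt (2 / Real.sqrt 3) * (Real.sqrt 3 / 2)) -
    (Real.sqrt (2 / Real.sqrt 3) * 0) * (Real.sqrt (2 / Real.sqrt 3) * (1 / 2)) = 1
  linear_combination e1' / 2

lemma epstein_tri (s : ℝ) :
    epsteinZeta triangularLattice s = ∑' p : {p : ℤ × ℤ // p ≠ 0}, triQ p.1 ^ (-s / 2) := by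
  rw [show triangularLattice = latticeSet (Real.sqrt (2 / Real.sqrt 3) • vec2 1 0)
      (Real.sqrt (2 / Real.sqrt 3) • vec2 (1 / 2) (Real.sqrt 3 / 2)) from rfl,
    epsteinZeta_param (by rw [det2_tri]; norm_num) s]
  refine tsum_congr fun p => ?_
  obtain ⟨⟨m, n⟩, hp⟩ := p
  rw [term_formula (a := Real.sqrt (2 / Real.sqrt 3)) (b := Real.sqrt (2 / Real.sqrt 3) * (1/2))
    (c := Real.sqrt (2 / Real.sqrt 3) * (Real.sqrt 3 / 2)) (mul_one _) (mul_zero _) rfl rfl]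
  congr 1
  have e1 : Real.sqrt (2 / Real.sqrt 3) ^ 2 = 2 / Real.sqrt 3 :=
    Real.sq_sqrt (by positivity)
  have e2 : Real.sqrt 3 ^ 2 = 3 := sqrt3_sq
  unfold triQ
  linear_combination (((m : ℝ) + (n : ℝ)/2)^2 + ((n : ℝ)^2/4) * Real.sqrt 3 ^ 2) * e1 +
    ((n : ℝ)^2/4 * (2 / Real.sqrt 3)) * e2

lemma summable_triTerm {s : ℝ} (hs : 2 < s) :
    Summable (fun p : {p : ℤ × ℤ // p ≠ 0} => triQ p.1 ^ (-s / 2)) := by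
  have hC : (0 : ℝ) < 2 := two_pos
  refine ((summable_sqTerm hs).mul_left ((2 : ℝ) ^ (s / 2))).of_nonneg_of_le
    (fun p => Real.rpow_nonneg (le_of_lt (triQ_pos p.2)) _) (fun p => ?_)
  exact rpow_bound (by linarith) hC (sqsum_pos p.2) (half_sqsum_le_triQ p.1)

lemma epstein_tri_mono {a b : ℝ} (hb : 2 < b) (hab : b ≤ a) :
    epsteinZeta triangularLattice a ≤ epsteinZeta triangularLattice b := by
  rw [epstein_tri, epstein_tri]
  refine Summable.tsum_le_tsum (fun p => ?_) (summable_triTerm (by linarith)) (summable_triTerm hb)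
  exact Real.rpow_le_rpow_of_exponent_le (one_le_triQ p.2) (by linarith)

lemma epstein_tri_pos {s : ℝ} (hs : 2 < s) : 0 < epsteinZeta triangularLattice s := by
  rw [epstein_tri]
  have h1 : ((1, 0) : ℤ × ℤ) ≠ 0 := by simp
  refine Summable.tsum_pos (summable_triTerm hs)
    (fun p => Real.rpow_nonneg (le_of_lt (triQ_pos p.2)) _) ⟨(1, 0), h1⟩ ?_
  exact Real.rpow_pos_of_pos (triQ_pos h1) _

/-! ### The lattice L(x,y) -/

def xyQ (x y : ℝ) (p : ℤ × ℤ) : ℝ :=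
  ((p.1 : ℝ) + x * (p.2 : ℝ)) ^ 2 / y + (p.2 : ℝ) ^ 2 * y

lemma xyQ_nonneg {x y : ℝ} (hy : 0 < y) (p : ℤ × ℤ) : 0 ≤ xyQ x y p := by
  unfold xyQ; positivity

lemma det2_xy {x y : ℝ} (hy : 0 < y) :
    det2 (vec2 (1 / Real.sqrt y) 0) (vec2 (x / Real.sqrt y) (Real.sqrt y)) = 1 := by
  have h : Real.sqrt y ≠ 0 := ne_of_gt (Real.sqrt_pos.mpr hy)
  show (1 / Real.sqrt y) * Real.sqrt y - 0 * (x / Real.sqrt y) = 1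
  field_simp
  ring

lemma epstein_xy {x y : ℝ} (hy : 0 < y) (s : ℝ) :
    epsteinZeta (latticeXY x y) s = ∑' p : {p : ℤ × ℤ // p ≠ 0}, xyQ x y p.1 ^ (-s / 2) := by
  rw [show latticeXY x y = latticeSet (vec2 (1 / Real.sqrt y) 0)
      (vec2 (x / Real.sqrt y) (Real.sqrt y)) from rfl,
    epsteinZeta_param (by rw [det2_xy hy]; norm_num) s]
  refine tsum_congr fun p => ?_
  rw [term_formula (a := 1 / Real.sqrt y) (b := x / Real.sqrt y) (c := Real.sqrt y)
    rfl rfl rfl rfl]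
  congr 1
  obtain ⟨⟨m, n⟩, hp⟩ := p
  have h : Real.sqrt y ≠ 0 := ne_of_gt (Real.sqrt_pos.mpr hy)
  have e : Real.sqrt y ^ 2 = y := Real.sq_sqrt hy.le
  unfold xyQ
  have expand : ((m : ℝ) * (1 / Real.sqrt y) + (n : ℝ) * (x / Real.sqrt y)) ^ 2 +
      ((n : ℝ) * Real.sqrt y) ^ 2 =
      ((m : ℝ) + x * (n : ℝ)) ^ 2 / Real.sqrt y ^ 2 + (n : ℝ) ^ 2 * Real.sqrt y ^ 2 := by
    field_simp
  rw [expand, e]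

def shiftPerm (x : ℝ) : Equiv.Perm (ℤ × ℤ) where
  toFun p := (p.1 + round (x * p.2), p.2)
  invFun p := (p.1 - round (x * p.2), p.2)
  left_inv p := by cases p; simp
  right_inv p := by cases p; simp

lemma shiftPerm_eq_zero_iff (x : ℝ) (p : ℤ × ℤ) : shiftPerm x p = 0 ↔ p = 0 := by
  cases p with
  | mk m n =>
    show ((m + round (x * (n : ℤ)), n) : ℤ × ℤ) = 0 ↔ _
    simp only [Prod.ext_iff, Prod.fst_zero, Prod.snd_zero]
    constructor
    · rintro ⟨h1, rfl⟩
      refine ⟨?_, rfl⟩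
      simp only [Int.cast_zero, mul_zero, round_zero] at h1
      omega
    · rintro ⟨rfl, rfl⟩
      simp

def shiftPermSub (x : ℝ) : Equiv.Perm {p : ℤ × ℤ // p ≠ 0} :=
  (shiftPerm x).subtypeEquiv (fun p => by rw [not_iff_not, shiftPerm_eq_zero_iff])

lemma xyQ_bound {x y : ℝ} (hy1 : 1 ≤ y) (p : {p : ℤ × ℤ // p ≠ 0}) :
    (((shiftPermSub x p : ℤ × ℤ).1 : ℝ) ^ 2 + ((shiftPermSub x p : ℤ × ℤ).2 : ℝ) ^ 2) / (3 * y)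
      ≤ xyQ x y p.1 := by
  have hy0 : (0 : ℝ) < y := lt_of_lt_of_le one_pos hy1
  obtain ⟨⟨m, n⟩, hp⟩ := p
  have hco : ((shiftPermSub x ⟨(m, n), hp⟩ : ℤ × ℤ)) = (m + round (x * (n : ℤ)), n) := rfl
  rw [hco]
  set m' : ℤ := m + round (x * (n : ℤ)) with hm'
  set δ : ℝ := x * (n : ℤ) - round (x * (n : ℤ)) with hδdef
  have hδ : |δ| ≤ 1 / 2 := abs_sub_round _
  have h0 : n = 0 → δ = 0 := by
    rintro rfl
    rw [hδdef]
    simp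
  have hne : ¬(m' = 0 ∧ n = 0) := by
    rintro ⟨h1, rfl⟩
    apply hp
    have : round (x * ((0 : ℤ) : ℝ)) = 0 := by simp
    rw [hm'] at h1
    rw [this] at h1
    simp only [add_zero] at h1
    rw [h1]
    rfl
  have hkey := key_ineq (m := m') (n := n) (y := y) (δ := δ) hy1 hδ h0 hne
  have hrw : ((m' : ℝ) + δ) = (m : ℝ) + x * (n : ℝ) := by
    rw [hm', hδdef]
    push_cast
    ring
  rw [hrw] at hkey
  have step : ((m' : ℝ) ^ 2 + (n : ℝ) ^ 2) / (3 * y) ≤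
      (((m : ℝ) + x * (n : ℝ)) ^ 2 + (n : ℝ) ^ 2 * y ^ 2) / y := by
    rw [show ((m' : ℝ) ^ 2 + (n : ℝ) ^ 2) / (3 * y) = (((m' : ℝ) ^ 2 + (n : ℝ) ^ 2) / 3) / y
      by ring]
    gcongr
  calc ((m' : ℝ) ^ 2 + (n : ℝ) ^ 2) / (3 * y)
      ≤ (((m : ℝ) + x * (n : ℝ)) ^ 2 + (n : ℝ) ^ 2 * y ^ 2) / y := step
    _ = xyQ x y (m, n) := by unfold xyQ; field_simp

lemma summable_xyTerm {x y s : ℝ} (hs : 2 < s) (hy1 : 1 ≤ y) :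
    Summable (fun p : {p : ℤ × ℤ // p ≠ 0} => xyQ x y p.1 ^ (-s / 2)) := by
  have hy0 : (0 : ℝ) < y := lt_of_lt_of_le one_pos hy1
  have hbase : Summable (fun p : {p : ℤ × ℤ // p ≠ 0} =>
      (3 * y) ^ (s / 2) * sqTerm s ((shiftPermSub x p : ℤ × ℤ))) :=
    ((shiftPermSub x).summable_iff (f := fun p : {p : ℤ × ℤ // p ≠ 0} =>
      (3 * y) ^ (s / 2) * sqTerm s p.1)).mpr ((summable_sqTerm hs).mul_left _)
  refine hbase.of_nonneg_of_le
    (fun p => Real.rpow_nonneg (xyQ_nonneg hy0 p.1) _) (fun p => ?_)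
  exact rpow_bound (by linarith) (by positivity) (sqsum_pos (shiftPermSub x p).2)
    (xyQ_bound hy1 p)

lemma tsum_xy_le {x y s : ℝ} (hs : 2 < s) (hy1 : 1 ≤ y) :
    epsteinZeta (latticeXY x y) s ≤ (3 * y) ^ (s / 2) * epsteinZeta squareLattice s := by
  have hy0 : (0 : ℝ) < y := lt_of_lt_of_le one_pos hy1
  rw [epstein_xy hy0, epstein_square]
  have hbase : Summable (fun p : {p : ℤ × ℤ // p ≠ 0} =>
      (3 * y) ^ (s / 2) * sqTerm s ((shiftPermSub x p : ℤ × ℤ))) :=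
    ((shiftPermSub x).summable_iff (f := fun p : {p : ℤ × ℤ // p ≠ 0} =>
      (3 * y) ^ (s / 2) * sqTerm s p.1)).mpr ((summable_sqTerm hs).mul_left _)
  have h1 : ∑' p : {p : ℤ × ℤ // p ≠ 0}, xyQ x y p.1 ^ (-s / 2) ≤
      ∑' p : {p : ℤ × ℤ // p ≠ 0}, (3 * y) ^ (s / 2) * sqTerm s ((shiftPermSub x p : ℤ × ℤ)) := by
    refine Summable.tsum_le_tsum (fun p => ?_) (summable_xyTerm hs hy1) hbase
    exact rpow_bound (by linarith) (by positivity) (sqsum_pos (shiftPermSub x p).2)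
      (xyQ_bound hy1 p)
  have h2 : ∑' p : {p : ℤ × ℤ // p ≠ 0}, (3 * y) ^ (s / 2) * sqTerm s ((shiftPermSub x p : ℤ × ℤ))
      = (3 * y) ^ (s / 2) * ∑' p : {p : ℤ × ℤ // p ≠ 0}, sqTerm s p.1 := by
    rw [(shiftPermSub x).tsum_eq (fun p : {p : ℤ × ℤ // p ≠ 0} =>
      (3 * y) ^ (s / 2) * sqTerm s p.1), tsum_mul_left]
  linarith [h1, h2.le, h2.ge]

lemma tsum_xy_ge {x y s : ℝ} (hs : 2 < s) (hy1 : 1 ≤ y) :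
    2 * riemannZetaReal s * y ^ (s / 2) ≤ epsteinZeta (latticeXY x y) s := by
  have hy0 : (0 : ℝ) < y := lt_of_lt_of_le one_pos hy1
  have hs1 : (1 : ℝ) < s := by linarith
  rw [epstein_xy hy0]
  have hf : ∑' m : ↥{m : ℤ | m ≠ 0}, y ^ (s / 2) * (((m : ℤ) : ℝ) ^ 2) ^ (-s / 2)
      = 2 * riemannZetaReal s * y ^ (s / 2) := by
    rw [tsum_mul_left, tsum_int_sq hs1]; ring
  rw [← hf]
  refine Summable.tsum_le_tsum_of_inj
    (fun m : ↥{m : ℤ | m ≠ 0} => (⟨((m : ℤ), 0), by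
      intro hc
      rw [Prod.ext_iff] at hc
      exact m.2 hc.1⟩ : {p : ℤ × ℤ // p ≠ 0}))
    (fun a b hab => ?_) (fun c _ => Real.rpow_nonneg (xyQ_nonneg hy0 c.1) _)
    (fun m => ?_) ((summable_int_sq hs1).mul_left _) (summable_xyTerm hs hy1)
  · have h1 : ((a : ℤ), (0 : ℤ)) = ((b : ℤ), (0 : ℤ)) := congrArg Subtype.val hab
    rw [Prod.ext_iff] at h1
    exact Subtype.ext h1.1
  · have hxy : xyQ x y ((m : ℤ), 0) = ((m : ℤ) : ℝ) ^ 2 / y := by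
      unfold xyQ
      push_cast
      norm_num
    have : xyQ x y ((m : ℤ), 0) ^ (-s / 2) = y ^ (s / 2) * (((m : ℤ) : ℝ) ^ 2) ^ (-s / 2) := by
      rw [hxy, rpow_div_eq (by positivity) hy0]
    exact le_of_eq this.symm

end QB
end QBsection

/-- Lemma 1, case `α ≠ 2β`: for `(x,y) ∈ D` with
`y > y_{α,β} = (3^{α/(α-β)}/2^{1+2/(α-β)})·(αζ_{ℤ²}(β)/(βζ(α)))^{2/(α-β)}`, one has
`ζ_{L(x,y)}(α) - ζ_{A₂}(α) > (α/β)(ζ_{L(x,y)}(β) - ζ_{A₂}(β))`. -/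
theorem quotient_bound_above_threshold_general
    (α β : ℝ) (hβ : 2 < β) (hαβ : β < α) (hne : α ≠ 2 * β) (yab : ℝ)
    (hyab : yab = (3 : ℝ) ^ (α / (α - β)) / (2 : ℝ) ^ (1 + 2 / (α - β)) *
      (α * epsteinZeta squareLattice β / (β * riemannZetaReal α)) ^ (2 / (α - β)))
    (x y : ℝ) (hy : 0 < y) (hx0 : 0 ≤ x) (hx : x ≤ 1 / 2) (hxy : 1 ≤ x ^ 2 + y ^ 2)
    (hythr : yab < y) :
    epsteinZeta (latticeXY x y) α - epsteinZeta triangularLattice α >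
      (α / β) * (epsteinZeta (latticeXY x y) β - epsteinZeta triangularLattice β) := by
  have hα2 : (2 : ℝ) < α := lt_trans hβ hαβ
  have hαβ' : (0 : ℝ) < α - β := by linarith
  have hβ0 : (0 : ℝ) < β := by linarith
  set ζα := riemannZetaReal α with hζαdef
  set Zβ := epsteinZeta squareLattice β with hZβdef
  have hζαpos : 0 < ζα := QB.zeta_pos (by linarith)
  have hζα2 : ζα ≤ 2 := QB.zeta_le_two (by linarith)
  have hZβ2 : 2 ≤ Zβ := QB.two_le_epstein_square hβ
  have hZβpos : 0 < Zβ := by linarith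
  set t := 2 / (α - β) with ht
  have htpos : 0 < t := by positivity
  set K := (3 : ℝ) ^ (β / 2) * α * Zβ / (2 * β * ζα) with hK
  have h3pos : (0 : ℝ) < (3 : ℝ) ^ (β / 2) := Real.rpow_pos_of_pos (by norm_num) _
  have h3b : (3 : ℝ) ≤ (3 : ℝ) ^ (β / 2) := by
    calc (3 : ℝ) = 3 ^ (1 : ℝ) := (Real.rpow_one 3).symm
      _ ≤ 3 ^ (β / 2) := Real.rpow_le_rpow_of_exponent_le (by norm_num) (by linarith)
  have hKpos : 0 < K := by rw [hK]; positivity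
  have hK1 : 1 ≤ K := by
    rw [hK, le_div_iff₀ (by positivity)]
    have e0 : (6 : ℝ) ≤ 3 ^ (β / 2) * Zβ := by nlinarith
    have e1 : 6 * α ≤ 3 ^ (β / 2) * Zβ * α :=
      mul_le_mul_of_nonneg_right e0 (by linarith)
    have eA : β * ζα ≤ β * 2 := mul_le_mul_of_nonneg_left hζα2 hβ0.le
    nlinarith [e1, eA]
  -- rewrite the threshold
  have hyab' : yab = (3 / 2) * K ^ t := by
    have e1 : α / (α - β) = 1 + (β / 2) * t := by
      rw [ht]; field_simp; try ring
    have e3 : (3 : ℝ) ^ (α / (α - β)) = 3 * ((3 : ℝ) ^ (β / 2)) ^ t := by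
      rw [e1, Real.rpow_add (by norm_num), Real.rpow_one, Real.rpow_mul (by norm_num)]
    have e4 : (2 : ℝ) ^ (1 + t) = 2 * (2 : ℝ) ^ t := by
      rw [Real.rpow_add (by norm_num), Real.rpow_one]
    have hR : (0 : ℝ) < α * Zβ / (β * ζα) := by positivity
    rw [hyab, e3, e4, hK, show (3 : ℝ) ^ (β / 2) * α * Zβ / (2 * β * ζα)
        = (3 : ℝ) ^ (β / 2) * (α * Zβ / (β * ζα)) / 2 by ring,
      Real.div_rpow (by positivity) (by norm_num : (0:ℝ) ≤ 2),
      Real.mul_rpow h3pos.le hR.le]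
    have h2t : (0:ℝ) < (2:ℝ) ^ t := Real.rpow_pos_of_pos (by norm_num) _
    field_simp
  have hKt_pos : 0 < K ^ t := Real.rpow_pos_of_pos hKpos t
  have hKt1 : 1 ≤ K ^ t := by
    calc (1 : ℝ) = 1 ^ t := (Real.one_rpow t).symm
      _ ≤ K ^ t := Real.rpow_le_rpow (by norm_num) hK1 htpos.le
  have hy1 : 1 ≤ y := by rw [hyab'] at hythr; linarith
  have hyKt : K ^ t < y := by rw [hyab'] at hythr; linarith
  have hyK : K ≤ y ^ ((α - β) / 2) := by
    have h1 : (K ^ t) ^ ((α - β) / 2) ≤ y ^ ((α - β) / 2) :=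
      Real.rpow_le_rpow hKt_pos.le hyKt.le (by positivity)
    have e : t * ((α - β) / 2) = 1 := by
      rw [ht]; field_simp
    have h2 : K = (K ^ t) ^ ((α - β) / 2) := by
      rw [← Real.rpow_mul hKpos.le, e, Real.rpow_one]
    linarith [h2 ▸ h1]
  -- main numeric inequality
  have hsplit : y ^ (α / 2) = y ^ (β / 2) * y ^ ((α - β) / 2) := by
    rw [← Real.rpow_add hy]; congr 1; ring
  have h3y : (3 * y) ^ (β / 2) = 3 ^ (β / 2) * y ^ (β / 2) := Real.mul_rpow (by norm_num) hy.le
  have hyb_pos : 0 < y ^ (β / 2) := Real.rpow_pos_of_pos hy _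
  have hmain : (α / β) * ((3 * y) ^ (β / 2) * Zβ) ≤ 2 * ζα * y ^ (α / 2) := by
    have h2 : 2 * ζα * K = (α / β) * 3 ^ (β / 2) * Zβ := by
      rw [hK]; field_simp
    calc (α / β) * ((3 * y) ^ (β / 2) * Zβ) = (2 * ζα * K) * y ^ (β / 2) := by
          rw [h3y, h2]; ring
      _ ≤ (2 * ζα * y ^ ((α - β) / 2)) * y ^ (β / 2) := by
          have h0 : 2 * ζα * K ≤ 2 * ζα * y ^ ((α - β) / 2) :=
            mul_le_mul_of_nonneg_left hyK (by positivity)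
          exact mul_le_mul_of_nonneg_right h0 hyb_pos.le
      _ = 2 * ζα * y ^ (α / 2) := by rw [hsplit]; ring
  -- lattice bounds
  have hlow : 2 * ζα * y ^ (α / 2) ≤ epsteinZeta (latticeXY x y) α := QB.tsum_xy_ge hα2 hy1
  have hup : epsteinZeta (latticeXY x y) β ≤ (3 * y) ^ (β / 2) * Zβ := QB.tsum_xy_le hβ hy1
  have htri_mono : epsteinZeta triangularLattice α ≤ epsteinZeta triangularLattice β :=
    QB.epstein_tri_mono hβ hαβ.le
  have htri_pos : 0 < epsteinZeta triangularLattice β := QB.epstein_tri_pos hβ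
  have hab1 : 1 < α / β := (one_lt_div hβ0).mpr hαβ
  have h5 : (α / β) * epsteinZeta (latticeXY x y) β ≤ (α / β) * ((3 * y) ^ (β / 2) * Zβ) :=
    mul_le_mul_of_nonneg_left hup (by positivity)
  have h6 : epsteinZeta triangularLattice β < (α / β) * epsteinZeta triangularLattice β :=
    (lt_mul_iff_one_lt_left htri_pos).mpr hab1
  have hexp : (α / β) * (epsteinZeta (latticeXY x y) β - epsteinZeta triangularLattice β)
      = (α / β) * epsteinZeta (latticeXY x y) β
        - (α / β) * epsteinZeta triangularLattice β := by ring
  rw [gt_iff_lt, hexp]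
  linarith
end

section
/- Let β > 2 and α = 2β, and define y_{α,β} = (9 / (2^{1+2/β} ζ(2β)^{2/β})) · (ζ_{ℤ²}(β) + √(ζ_{ℤ²}(β)² − (2/3^β) ζ(2β) (2 ζ_{A₂}(β) − ζ_{A₂}(2β))))^{2/β}, where ζ is the Riemann zeta function. Let (x, y) ∈ D with y > y_{α,β}, and let L(x,y) be the lattice of co-volume 1 with quadratic form Q(m,n) = (m + x n)²/y + y n². Then ζ_{L(x,y)}(α) − ζ_{A₂}(α) > (α/β)·(ζ_{L(x,y)}(β) − ζ_{A₂}(β)). -/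
/-! On the half fundamental domain the form `(m + x n)²/y + y n²` dominates `(m² + n²)/(2y)`, so
`ζ_{L(x,y)}(β) ≤ (2y)^{β/2} ζ_{ℤ²}(β)`, while the points `(k, 0)` alone give
`ζ_{L(x,y)}(2β) ≥ y^β ζ(2β)`. With `z = y^{β/2}` the claim thus reduces to the positivity of the
quadratic `ζ(2β) z² - 2^{1+β/2} ζ_{ℤ²}(β) z + 2ζ_{A₂}(β) - ζ_{A₂}(2β)`, and `y > y_{α,β}` puts `z`
to the right of its roots once `2^{1+β} ≤ 3^β` is used to compare the discriminants. -/

open Real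

noncomputable section

@[simp] lemma vec2_apply_zero (a b : ℝ) : vec2 a b 0 = a := rfl

@[simp] lemma vec2_apply_one (a b : ℝ) : vec2 a b 1 = b := rfl

def latticePoint (u v : EuclideanSpace ℝ (Fin 2)) (q : Fin 2 → ℤ) : EuclideanSpace ℝ (Fin 2) :=
  (q 0 : ℝ) • u + (q 1 : ℝ) • v

section LatticeSet

variable {u v : EuclideanSpace ℝ (Fin 2)}

@[simp]
lemma latticePoint_apply (q : Fin 2 → ℤ) (i : Fin 2) :
    latticePoint u v q i = q 0 * u i + q 1 * v i := by
  simp [latticePoint]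

lemma latticePoint_injective (h : det2 u v ≠ 0) : Function.Injective (latticePoint u v) := by
  intro q q' hq
  have h0 : (q 0 : ℝ) * u 0 + q 1 * v 0 = q' 0 * u 0 + q' 1 * v 0 := by
    simpa using congrArg (· 0) hq
  have h1 : (q 0 : ℝ) * u 1 + q 1 * v 1 = q' 0 * u 1 + q' 1 * v 1 := by
    simpa using congrArg (· 1) hq
  have e0 : ((q 0 : ℝ) - q' 0) * det2 u v = 0 := by
    unfold det2; linear_combination v 1 * h0 - v 0 * h1
  have e1 : ((q 1 : ℝ) - q' 1) * det2 u v = 0 := by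
    unfold det2; linear_combination u 0 * h1 - u 1 * h0
  have c0 := sub_eq_zero.1 ((mul_eq_zero.1 e0).resolve_right h)
  have c1 := sub_eq_zero.1 ((mul_eq_zero.1 e1).resolve_right h)
  funext i
  fin_cases i
  · exact_mod_cast c0
  · exact_mod_cast c1

lemma latticeSet_eq_range : latticeSet u v = Set.range (latticePoint u v) := by
  ext p
  constructor
  · rintro ⟨m, n, rfl⟩
    exact ⟨![m, n], by simp [latticePoint]⟩
  · rintro ⟨q, rfl⟩
    exact ⟨q 0, q 1, rfl⟩

lemma latticeSet_diff_zero (h : det2 u v ≠ 0) :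
    latticeSet u v \ {0} = latticePoint u v '' {0}ᶜ := by
  rw [Set.image_compl_eq_range_sdiff_image (latticePoint_injective h), Set.image_singleton,
    latticeSet_eq_range]
  simp [latticePoint]

lemma epsteinZeta_latticeSet (h : det2 u v ≠ 0) (s : ℝ) :
    epsteinZeta (latticeSet u v) s =
      ∑' q : {q : Fin 2 → ℤ // q ≠ 0}, ‖latticePoint u v q‖ ^ (-s) := by
  rw [epsteinZeta, latticeSet_diff_zero h]
  exact tsum_image (‖·‖ ^ (-s)) (latticePoint_injective h).injOn

end LatticeSet

lemma epsteinZeta_nonneg (L : Set (EuclideanSpace ℝ (Fin 2))) (s : ℝ) : 0 ≤ epsteinZeta L s :=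
  tsum_nonneg fun _ => rpow_nonneg (norm_nonneg _) _

lemma div_rpow_neg {a c : ℝ} (ha : 0 ≤ a) (hc : 0 ≤ c) (s : ℝ) :
    (a / c) ^ (-s) = c ^ s * a ^ (-s) := by
  rw [div_rpow ha hc, rpow_neg hc, div_inv_eq_mul, mul_comm]

lemma rpow_neg_le_of_le_mul {a b c s : ℝ} (ha : 0 < a) (hc : 0 < c) (hs : 0 ≤ s)
    (h : a ≤ c * b) : b ^ (-s) ≤ c ^ s * a ^ (-s) :=
  calc b ^ (-s) ≤ (a / c) ^ (-s) :=
        rpow_le_rpow_of_nonpos (div_pos ha hc) ((div_le_iff₀' hc).2 h) (neg_nonpos.2 hs)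
    _ = c ^ s * a ^ (-s) := div_rpow_neg ha.le hc.le s

section Comparison

variable {ι : Type*} {f g : ι → ℝ} {c s : ℝ}

lemma summable_rpow_neg_of_le_mul (hg : ∀ i, 0 < g i) (hc : 0 < c) (hs : 0 ≤ s)
    (h : ∀ i, g i ≤ c * f i) (hsum : Summable fun i => g i ^ (-s)) :
    Summable fun i => f i ^ (-s) :=
  (hsum.mul_left (c ^ s)).of_nonneg_of_le
    (fun i => rpow_nonneg (pos_of_mul_pos_right ((hg i).trans_le (h i)) hc.le).le _)
    (fun i => rpow_neg_le_of_le_mul (hg i) hc hs (h i))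

lemma tsum_rpow_neg_le_of_le_mul (hg : ∀ i, 0 < g i) (hc : 0 < c) (hs : 0 ≤ s)
    (h : ∀ i, g i ≤ c * f i) (hsum : Summable fun i => g i ^ (-s)) :
    ∑' i, f i ^ (-s) ≤ c ^ s * ∑' i, g i ^ (-s) := by
  rw [← tsum_mul_left]
  exact (summable_rpow_neg_of_le_mul hg hc hs h hsum).tsum_le_tsum
    (fun i => rpow_neg_le_of_le_mul (hg i) hc hs (h i)) (hsum.mul_left _)

end Comparison

lemma sq_add_sq_le_of_abs_le_half {x y : ℝ} (hx : |x| ≤ 1 / 2) (hxy : 1 ≤ x ^ 2 + y ^ 2)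
    (m n : ℝ) : m ^ 2 + n ^ 2 ≤ 2 * (m + x * n) ^ 2 + 2 * y ^ 2 * n ^ 2 := by
  have hx2 : x ^ 2 ≤ 1 / 4 := by nlinarith [sq_abs x, abs_nonneg x]
  nlinarith [sq_nonneg (m + 2 * x * n),
    mul_nonneg (by linarith : 0 ≤ 2 * y ^ 2 - 2 * x ^ 2 - 1) (sq_nonneg n)]

def latticePointXY (x y : ℝ) : (Fin 2 → ℤ) → EuclideanSpace ℝ (Fin 2) :=
  latticePoint (vec2 (1 / √y) 0) (vec2 (x / √y) (√y))

section LatticeXY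

variable {x y : ℝ}

lemma epsteinZeta_latticeXY (hy : 0 < y) (s : ℝ) :
    epsteinZeta (latticeXY x y) s =
      ∑' q : {q : Fin 2 → ℤ // q ≠ 0}, ‖latticePointXY x y q‖ ^ (-s) := by
  refine epsteinZeta_latticeSet ?_ s
  have : √y ≠ 0 := (sqrt_pos.2 hy).ne'
  simp [det2, this]

lemma norm_sq_latticePointXY (hy : 0 < y) (q : Fin 2 → ℤ) :
    ‖latticePointXY x y q‖ ^ 2 = ((q 0 : ℝ) + x * q 1) ^ 2 / y + y * (q 1 : ℝ) ^ 2 := by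
  obtain ⟨r, hr, rfl⟩ : ∃ r, 0 < r ∧ y = r ^ 2 := ⟨√y, sqrt_pos.2 hy, (sq_sqrt hy.le).symm⟩
  rw [EuclideanSpace.norm_sq_eq, Fin.sum_univ_two]
  simp only [latticePointXY, latticePoint_apply, vec2_apply_zero, vec2_apply_one, Real.norm_eq_abs,
    sq_abs, sqrt_sq hr.le]
  field_simp
  ring

lemma norm_sq_latticePoint_square (q : Fin 2 → ℤ) :
    ‖latticePoint (vec2 1 0) (vec2 0 1) q‖ ^ 2 = (q 0 : ℝ) ^ 2 + (q 1 : ℝ) ^ 2 := by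
  rw [EuclideanSpace.norm_sq_eq, Fin.sum_univ_two]
  simp

lemma norm_le_norm_latticePoint_square (q : Fin 2 → ℤ) :
    ‖q‖ ≤ ‖latticePoint (vec2 1 0) (vec2 0 1) q‖ := by
  refine (pi_norm_le_iff_of_nonneg (norm_nonneg _)).2 fun i => ?_
  have := PiLp.norm_apply_le (latticePoint (vec2 1 0) (vec2 0 1) q) i
  fin_cases i <;> simpa [Int.norm_eq_abs] using this

lemma norm_latticePoint_square_le (hy : 0 < y) (hx : |x| ≤ 1 / 2) (hxy : 1 ≤ x ^ 2 + y ^ 2)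
    (q : Fin 2 → ℤ) :
    ‖latticePoint (vec2 1 0) (vec2 0 1) q‖ ≤ √(2 * y) * ‖latticePointXY x y q‖ := by
  refine (pow_le_pow_iff_left₀ (norm_nonneg _) (by positivity) two_ne_zero).1 ?_
  rw [mul_pow, sq_sqrt (by positivity), norm_sq_latticePoint_square, norm_sq_latticePointXY hy]
  calc _ ≤ 2 * ((q 0 : ℝ) + x * q 1) ^ 2 + 2 * y ^ 2 * (q 1 : ℝ) ^ 2 :=
        sq_add_sq_le_of_abs_le_half hx hxy _ _
    _ = _ := by field_simp

lemma summable_latticePoint_square {s : ℝ} (hs : 2 < s) :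
    Summable fun q : {q : Fin 2 → ℤ // q ≠ 0} => ‖latticePoint (vec2 1 0) (vec2 0 1) q‖ ^ (-s) :=
  summable_rpow_neg_of_le_mul (fun q => norm_pos_iff.2 q.2) one_pos (by linarith)
    (fun q => (one_mul (‖latticePoint _ _ _‖)).symm ▸ norm_le_norm_latticePoint_square q.1)
    ((EisensteinSeries.summable_one_div_norm_rpow hs).comp_injective Subtype.val_injective)

lemma epsteinZeta_latticeXY_le (hy : 0 < y) (hx : |x| ≤ 1 / 2) (hxy : 1 ≤ x ^ 2 + y ^ 2)
    {s : ℝ} (hs : 2 < s) :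
    epsteinZeta (latticeXY x y) s ≤ (2 * y) ^ (s / 2) * epsteinZeta squareLattice s := by
  rw [epsteinZeta_latticeXY hy, squareLattice, epsteinZeta_latticeSet (by simp [det2]),
    rpow_div_two_eq_sqrt _ (by positivity)]
  exact tsum_rpow_neg_le_of_le_mul
    (fun q => (norm_pos_iff.2 q.2).trans_le (norm_le_norm_latticePoint_square q.1))
    (by positivity) (by linarith) (fun q => norm_latticePoint_square_le hy hx hxy q.1)
    (summable_latticePoint_square hs)

lemma summable_latticePointXY (hy : 0 < y) (hx : |x| ≤ 1 / 2) (hxy : 1 ≤ x ^ 2 + y ^ 2)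
    {s : ℝ} (hs : 2 < s) :
    Summable fun q : {q : Fin 2 → ℤ // q ≠ 0} => ‖latticePointXY x y q‖ ^ (-s) :=
  summable_rpow_neg_of_le_mul
    (fun q => (norm_pos_iff.2 q.2).trans_le (norm_le_norm_latticePoint_square q.1))
    (by positivity) (by linarith) (fun q => norm_latticePoint_square_le hy hx hxy q.1)
    (summable_latticePoint_square hs)

lemma norm_latticePointXY_horizontal (hy : 0 < y) (k : ℤ) :
    ‖latticePointXY x y ![k, 0]‖ = |(k : ℝ)| / √y := by
  rw [← sqrt_sq (norm_nonneg _), norm_sq_latticePointXY hy]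
  simp [sqrt_div' _ hy.le, sqrt_sq_eq_abs]

lemma summable_pnat_rpow_neg {s : ℝ} (hs : 1 < s) : Summable fun k : ℕ+ => (k : ℝ) ^ (-s) :=
  (summable_nat_rpow.2 (neg_lt_neg hs)).comp_injective PNat.coe_injective

lemma rpow_mul_riemannZetaReal_le_epsteinZeta_latticeXY (hy : 0 < y) (hx : |x| ≤ 1 / 2)
    (hxy : 1 ≤ x ^ 2 + y ^ 2) {s : ℝ} (hs : 2 < s) :
    y ^ (s / 2) * riemannZetaReal s ≤ epsteinZeta (latticeXY x y) s := by
  rw [epsteinZeta_latticeXY hy, riemannZetaReal, ← tsum_mul_left]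
  let i : ℕ+ → {q : Fin 2 → ℤ // q ≠ 0} := fun k => ⟨![k, 0], by simp⟩
  have hi : Function.Injective i := fun k k' h => by
    simpa [i] using congrFun (congrArg Subtype.val h) 0
  refine Summable.tsum_le_tsum_of_inj i hi (fun _ _ => rpow_nonneg (norm_nonneg _) _)
    (fun k => ?_) ((summable_pnat_rpow_neg (by linarith)).mul_left _)
    (summable_latticePointXY hy hx hxy hs)
  rw [norm_latticePointXY_horizontal hy, div_rpow_neg (abs_nonneg _) (sqrt_nonneg _),
    ← rpow_div_two_eq_sqrt _ hy.le]
  simp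

end LatticeXY

lemma riemannZetaReal_pos {s : ℝ} (hs : 1 < s) : 0 < riemannZetaReal s :=
  (summable_pnat_rpow_neg hs).tsum_pos (fun _ => rpow_nonneg (by positivity) _) 1 (by simp)

lemma two_mul_two_rpow_le_three_rpow {β : ℝ} (hβ : 2 ≤ β) : 2 * (2 : ℝ) ^ β ≤ 3 ^ β :=
  calc 2 * (2 : ℝ) ^ β ≤ (3 / 2) ^ β * 2 ^ β := by
        gcongr
        calc (2 : ℝ) ≤ (3 / 2) ^ (2 : ℝ) := by norm_num
          _ ≤ (3 / 2) ^ β := rpow_le_rpow_of_exponent_le (by norm_num) hβ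
    _ = 3 ^ β := by rw [← mul_rpow (by norm_num) (by norm_num)]; norm_num

lemma threshold_rpow {β Z T : ℝ} (hβ : 0 < β) (hZ : 0 < Z) (hT : 0 ≤ T) :
    (9 / ((2 : ℝ) ^ (1 + 2 / β) * Z ^ (2 / β)) * T ^ (2 / β)) ^ (β / 2) =
      3 ^ β * T / (2 * 2 ^ (β / 2) * Z) := by
  have hinv : 2 / β * (β / 2) = 1 := by field_simp
  rw [mul_rpow (by positivity) (by positivity), ← rpow_mul hT, hinv, rpow_one,
    div_rpow (by norm_num) (by positivity), mul_rpow (by positivity) (by positivity),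
    ← rpow_mul (by norm_num), ← rpow_mul hZ.le, hinv, rpow_one,
    show (1 + 2 / β) * (β / 2) = 1 + β / 2 by field_simp; ring, rpow_add two_pos, rpow_one,
    show (9 : ℝ) = 3 ^ (2 : ℝ) by norm_num, ← rpow_mul (by norm_num),
    show (2 : ℝ) * (β / 2) = β by ring]
  ring

lemma quadratic_pos_of_threshold_lt {Z Zs C a b z : ℝ} (hZ : 0 < Z) (ha : 0 < a) (hb : 0 < b)
    (hab : 2 * b ^ 2 ≤ a) (hz : a * (Zs + √(Zs ^ 2 - 2 / a * Z * C)) / (2 * b * Z) < z) :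
    0 < Z * z ^ 2 - 2 * b * Zs * z + C := by
  have hlin : a * √(Zs ^ 2 - 2 / a * Z * C) < 2 * b * Z * z - a * Zs := by
    rw [div_lt_iff₀ (by positivity)] at hz
    linarith
  have hsq : a ^ 2 * Zs ^ 2 - 2 * a * Z * C < (2 * b * Z * z - a * Zs) ^ 2 := by
    have hpos : 0 < (2 * b * Z * z - a * Zs) / a :=
      div_pos ((mul_nonneg ha.le (sqrt_nonneg _)).trans_lt hlin) ha
    have := (sqrt_lt' hpos).1 ((lt_div_iff₀' ha).2 hlin)
    rw [div_pow, lt_div_iff₀ (by positivity)] at this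
    field_simp at this
    linarith
  have hmono : 2 * b ^ 2 * (2 * Z ^ 2 * z ^ 2) ≤ a * (2 * Z ^ 2 * z ^ 2) :=
    mul_le_mul_of_nonneg_right hab (by positivity)
  have : 0 < 2 * a * Z * (Z * z ^ 2 - 2 * b * Zs * z + C) := by nlinarith
  exact pos_of_mul_pos_right this (by positivity)

end

/-- Lemma 1, case `α = 2β`: for `(x,y) ∈ D` with
`y > y_{α,β} = (9/(2^{1+2/β}ζ(2β)^{2/β}))·(ζ_{ℤ²}(β) + √(ζ_{ℤ²}(β)² - (2/3^β)ζ(2β)(2ζ_{A₂}(β) - ζ_{A₂}(2β))))^{2/β}`,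
one has `ζ_{L(x,y)}(α) - ζ_{A₂}(α) > (α/β)(ζ_{L(x,y)}(β) - ζ_{A₂}(β))`. -/
theorem quotient_bound_above_threshold_special
    (β : ℝ) (hβ : 2 < β) (α : ℝ) (hα : α = 2 * β) (yab : ℝ)
    (hyab : yab = 9 / ((2 : ℝ) ^ (1 + 2 / β) * riemannZetaReal (2 * β) ^ (2 / β)) *
      (epsteinZeta squareLattice β +
        Real.sqrt (epsteinZeta squareLattice β ^ 2 -
          2 / (3 : ℝ) ^ β * riemannZetaReal (2 * β) *
            (2 * epsteinZeta triangularLattice β -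
              epsteinZeta triangularLattice (2 * β)))) ^ (2 / β))
    (x y : ℝ) (hy : 0 < y) (hx0 : 0 ≤ x) (hx : x ≤ 1 / 2) (hxy : 1 ≤ x ^ 2 + y ^ 2)
    (hythr : yab < y) :
    epsteinZeta (latticeXY x y) α - epsteinZeta triangularLattice α >
      (α / β) * (epsteinZeta (latticeXY x y) β - epsteinZeta triangularLattice β) := by
  subst hα
  have hβ0 : 0 < β := by linarith
  have hZ : 0 < riemannZetaReal (2 * β) := riemannZetaReal_pos (by linarith)
  have hT : 0 ≤ epsteinZeta squareLattice β + √(epsteinZeta squareLattice β ^ 2 -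
      2 / (3 : ℝ) ^ β * riemannZetaReal (2 * β) *
        (2 * epsteinZeta triangularLattice β - epsteinZeta triangularLattice (2 * β))) :=
    add_nonneg (epsteinZeta_nonneg _ _) (sqrt_nonneg _)
  have hthr := rpow_lt_rpow (hyab ▸ mul_nonneg (by positivity) (rpow_nonneg hT _)) hythr
    (by positivity : 0 < β / 2)
  rw [hyab, threshold_rpow hβ0 hZ hT] at hthr
  have hb : 2 * ((2 : ℝ) ^ (β / 2)) ^ 2 ≤ 3 ^ β := by
    rw [← rpow_natCast, ← rpow_mul zero_le_two]
    simpa using two_mul_two_rpow_le_three_rpow hβ.le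
  have hquad := quadratic_pos_of_threshold_lt hZ (by positivity) (by positivity) hb hthr
  have hx' : |x| ≤ 1 / 2 := abs_le.2 ⟨by linarith, hx⟩
  have hlow := rpow_mul_riemannZetaReal_le_epsteinZeta_latticeXY hy hx' hxy
    (by linarith : 2 < 2 * β)
  have hup := epsteinZeta_latticeXY_le hy hx' hxy hβ
  rw [mul_div_cancel_left₀ β two_ne_zero] at hlow
  rw [mul_rpow zero_le_two hy.le] at hup
  have hz2 : (y ^ (β / 2)) ^ 2 = y ^ β := by
    rw [← rpow_natCast, ← rpow_mul hy.le]
    norm_num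
  rw [hz2] at hquad
  rw [mul_div_cancel_right₀ 2 hβ0.ne']
  linarith
end
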